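/- arXiv:math/9306214 — 6 statements merged into one kernel-verified Lean document; each statement's English description precedes it below -/
import Mathlib

section
/- If the dominating number 𝔡 equals the continuum 𝔠, then there exists a family {f_i : i < 𝔠} of functions in ω^ω such that for every g ∈ ω^ω, the set {i < 𝔠 : f_i ≤* g} has cardinality less than 𝔠. -/
open Cardinal Filter

/-- `f` is eventually dominated strictly by `h`. -/
def EvDom (g h : ℕ → ℕ) : Prop := ∀ᶠ n in atTop, g n < h n

/-- `f ≤* g`: `f n ≤ g n` for all but finitely many `n`. -/
def EvLE (f g : ℕ → ℕ) : Prop := ∀ᶠ n in atTop, f n ≤ g n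

/-- The dominating number 𝔡. -/
noncomputable def domNumber : Cardinal :=
  sInf {c | ∃ H : Set (ℕ → ℕ), #H = c ∧ ∀ g : ℕ → ℕ, ∃ h ∈ H, EvDom g h}

theorem stmt0 (hd : domNumber = continuum) :
    ∃ (ι : Type) (f : ι → ℕ → ℕ), #ι = continuum ∧
      ∀ g : ℕ → ℕ, #{i : ι // EvLE (f i) g} < continuum := by
  set ι := continuum.ord.ToType with hι
  have hmk : #ι = continuum := by rw [hι, Cardinal.mk_toType, card_ord]
  have hfun : #(ℕ → ℕ) = continuum := by
    rw [mk_arrow, mk_nat, lift_aleph0, aleph0_power_aleph0]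
  have e : ι ≃ (ℕ → ℕ) := Classical.choice (Cardinal.eq.mp (hmk.trans hfun.symm))
  have hIic : ∀ i : ι, #(Set.Iic i) < continuum := by
    intro i
    have h1 : (Set.Iic i) = insert i (Set.Iio i) := by
      ext x; simp [le_iff_lt_or_eq, or_comm]
    rw [h1]
    calc #(insert i (Set.Iio i) : Set ι) ≤ #(Set.Iio i) + 1 := mk_insert_le
      _ < continuum := add_lt_of_lt aleph0_le_continuum (mk_Iio_ord_toType i)
        (one_lt_aleph0.trans_le aleph0_le_continuum)
  have key : ∀ i : ι, ∃ f : ℕ → ℕ, ∀ j ≤ i, ¬ EvLE f (e j) := by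
    intro i
    set S : Set (ℕ → ℕ) := Set.range (fun j : Set.Iic i => fun n => e j n + 1) with hS
    have hScard : #S < continuum := lt_of_le_of_lt mk_range_le (hIic i)
    have hnotdom : ¬ ∀ g : ℕ → ℕ, ∃ h ∈ S, EvDom g h := by
      intro hdom
      have : domNumber ≤ #S := csInf_le' ⟨S, rfl, hdom⟩
      rw [hd] at this
      exact absurd this (not_le.mpr hScard)
    push_neg at hnotdom
    obtain ⟨f, hf⟩ := hnotdom
    refine ⟨f, fun j hj hle => ?_⟩
    have hmem : (fun n => e j n + 1) ∈ S := ⟨⟨j, hj⟩, rfl⟩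
    exact hf _ hmem (hle.mono fun n hn => Nat.lt_succ_of_le hn)
  choose f hf using key
  refine ⟨ι, f, hmk, fun g => ?_⟩
  have hsub : {i : ι | EvLE (f i) g} ⊆ Set.Iic (e.symm g) := by
    intro i hi
    by_contra hlt
    exact hf i (e.symm g) (le_of_not_ge hlt) (by simpa using hi)
  exact lt_of_le_of_lt (mk_le_mk_of_subset hsub) (hIic _)
end

section
/- If every set of reals of cardinality less than 𝔠 has strong measure zero, and 𝔡 = 𝔠, then there exists a strong measure zero set of reals of cardinality 𝔠. -/
open Cardinal Filter

/-- A set of reals has strong measure zero. -/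
def HasStrongMeasureZero (X : Set ℝ) : Prop :=
  ∀ ε : ℕ → ℝ, (∀ i, 0 < ε i) →
    ∃ x : ℕ → ℝ, X ⊆ ⋃ i, Set.Ioo (x i - ε i) (x i + ε i)

open Set

noncomputable section

namespace SMZ1

/-- child interval step: inside `(p.1, p.2)`, the `k`-th child interval. -/
def step (p : ℚ × ℚ) (k : ℕ) : ℚ × ℚ :=
  (p.1 + (p.2 - p.1) * (1 - (2:ℚ)⁻¹ ^ (k+1)),
   p.1 + (p.2 - p.1) * (1 - (2:ℚ)⁻¹ ^ (k+1)) + (p.2 - p.1) * ((2:ℚ)⁻¹ ^ (k+1) / 4))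

lemma t_pos (k : ℕ) : (0:ℚ) < (2:ℚ)⁻¹ ^ (k+1) := by positivity

lemma t_le_half (k : ℕ) : (2:ℚ)⁻¹ ^ (k+1) ≤ 1/2 := by
  calc (2:ℚ)⁻¹ ^ (k+1) ≤ (2:ℚ)⁻¹ ^ 1 :=
        pow_le_pow_of_le_one (by norm_num) (by norm_num) (by omega)
    _ = 1/2 := by norm_num

lemma step_lt {p : ℚ × ℚ} (h : p.1 < p.2) (k : ℕ) : (step p k).1 < (step p k).2 := by
  have := t_pos k
  simp only [step]
  nlinarith

lemma step_left {p : ℚ × ℚ} (h : p.1 < p.2) (k : ℕ) : p.1 < (step p k).1 := by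
  have h1 := t_pos k
  have h2 := t_le_half k
  simp only [step]
  nlinarith

lemma step_right {p : ℚ × ℚ} (h : p.1 < p.2) (k : ℕ) : (step p k).2 < p.2 := by
  have h1 := t_pos k
  have h2 := t_le_half k
  simp only [step]
  nlinarith

lemma step_order {p : ℚ × ℚ} (h : p.1 < p.2) {k k' : ℕ} (hk : k < k') :
    (step p k).2 < (step p k').1 := by
  have h1 := t_pos k
  have h2 : (2:ℚ)⁻¹ ^ (k'+1) ≤ (2:ℚ)⁻¹ ^ (k+2) :=
    pow_le_pow_of_le_one (by norm_num) (by norm_num) (by omega)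
  have h3 : (2:ℚ)⁻¹ ^ (k+2) = (2:ℚ)⁻¹ ^ (k+1) / 2 := by
    rw [pow_succ]; ring
  simp only [step]
  nlinarith [t_pos k']

lemma step_near {p : ℚ × ℚ} (k : ℕ) :
    p.2 - (step p k).1 = (p.2 - p.1) * (2:ℚ)⁻¹ ^ (k+1) := by
  simp only [step]; ring

/-- iterated intervals along `f`. -/
def iter (f : ℕ → ℕ) : ℕ → ℚ × ℚ
  | 0 => (0, 1)
  | n+1 => step (iter f n) (f n)

lemma iter_lt (f : ℕ → ℕ) : ∀ n, (iter f n).1 < (iter f n).2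
  | 0 => by norm_num [iter]
  | n+1 => step_lt (iter_lt f n) _

lemma iter_mono (f : ℕ → ℕ) : Monotone fun n => (iter f n).1 :=
  monotone_nat_of_le_succ fun n => (step_left (iter_lt f n) _).le

lemma iter_anti (f : ℕ → ℕ) : Antitone fun n => (iter f n).2 :=
  antitone_nat_of_succ_le fun n => (step_right (iter_lt f n) _).le

lemma iter_a_lt_b (f : ℕ → ℕ) (m n : ℕ) : (iter f m).1 < (iter f n).2 := by
  rcases le_total m n with h | h
  · exact lt_of_le_of_lt (iter_mono f h) (iter_lt f n)
  · exact lt_of_lt_of_le (iter_lt f m) (iter_anti f h)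

/-- the real coded by `f`. -/
def eF (f : ℕ → ℕ) : ℝ := ⨆ n, ((iter f n).1 : ℝ)

lemma eF_bdd (f : ℕ → ℕ) : BddAbove (Set.range fun n => ((iter f n).1 : ℝ)) := by
  refine ⟨((iter f 0).2 : ℝ), ?_⟩
  rintro x ⟨m, rfl⟩
  simp only []
  exact_mod_cast (iter_a_lt_b f m 0).le

lemma le_eF (f : ℕ → ℕ) (n : ℕ) : ((iter f n).1 : ℝ) ≤ eF f :=
  le_ciSup (eF_bdd f) n

lemma eF_le (f : ℕ → ℕ) (n : ℕ) : eF f ≤ ((iter f n).2 : ℝ) :=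
  ciSup_le fun m => by exact_mod_cast (iter_a_lt_b f m n).le

lemma iter_congr {f f' : ℕ → ℕ} {n : ℕ} (h : ∀ m < n, f m = f' m) :
    iter f n = iter f' n := by
  induction n with
  | zero => rfl
  | succ n ih =>
    simp only [iter, ih fun m hm => h m (Nat.lt_succ_of_lt hm), h n (Nat.lt_succ_self n)]

lemma eF_lt {f f' : ℕ → ℕ} {n : ℕ} (hlt : f n < f' n) (h : ∀ m < n, f m = f' m) :
    eF f < eF f' := by
  have hc := iter_congr h
  have h1 : eF f ≤ ((iter f (n+1)).2 : ℝ) := eF_le f (n+1)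
  have h2 : ((iter f' (n+1)).1 : ℝ) ≤ eF f' := le_eF f' (n+1)
  have key : (iter f (n+1)).2 < (iter f' (n+1)).1 := by
    show (step (iter f n) (f n)).2 < (step (iter f' n) (f' n)).1
    rw [hc]
    exact step_order (iter_lt f' n) hlt
  calc eF f ≤ ((iter f (n+1)).2 : ℝ) := h1
    _ < ((iter f' (n+1)).1 : ℝ) := by exact_mod_cast key
    _ ≤ eF f' := h2

lemma eF_injective : Function.Injective eF := by
  intro f f' hfe
  by_contra hne
  have hex : ∃ m, f m ≠ f' m := by
    by_contra hc
    push_neg at hc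
    exact hne (funext hc)
  set n := Nat.find hex with hn
  have hne' : f n ≠ f' n := Nat.find_spec hex
  have hmin : ∀ m < n, f m = f' m := fun m hm => by
    by_contra hc
    exact Nat.find_min hex hm hc
  rcases lt_or_gt_of_ne hne' with h | h
  · exact absurd hfe (eF_lt h hmin).ne
  · exact absurd hfe.symm (eF_lt h fun m hm => (hmin m hm).symm).ne

end SMZ1

namespace SMZ1

/-- enumeration of the rationals -/
def qe : ℕ → ℚ := (Denumerable.eqv ℚ).symm

def qidx (b : ℚ) : ℕ := Denumerable.eqv ℚ b

lemma qe_qidx (b : ℚ) : qe (qidx b) = b := (Denumerable.eqv ℚ).symm_apply_apply b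

/-- positive version of a radius sequence -/
def Upos (δ : ℕ → ℝ) (i : ℕ) : ℝ := if 0 < δ i then δ i else 1

lemma Upos_pos (δ : ℕ → ℝ) (i : ℕ) : 0 < Upos δ i := by
  unfold Upos; split <;> [assumption; norm_num]

lemma Upos_eq {δ : ℕ → ℝ} (h : ∀ i, 0 < δ i) (i : ℕ) : Upos δ i = δ i := if_pos (h i)

/-- the open set around the rationals determined by `δ` -/
def USet (δ : ℕ → ℝ) : Set ℝ := ⋃ i, Set.Ioo ((qe i : ℝ) - Upos δ i) ((qe i : ℝ) + Upos δ i)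

lemma exK (δ : ℕ → ℝ) (p : ℚ × ℚ) :
    ∃ K : ℕ, ((p.2 : ℝ) - (p.1 : ℝ)) * (2:ℝ)⁻¹ ^ (K+1) < Upos δ (qidx p.2) := by
  rcases le_or_gt ((p.2 : ℝ) - (p.1 : ℝ)) 0 with h | h
  · exact ⟨0, lt_of_le_of_lt (by nlinarith [pow_pos (by norm_num : (0:ℝ) < 2⁻¹) 1])
      (Upos_pos δ _)⟩
  · obtain ⟨n, hn⟩ := exists_pow_lt_of_lt_one
      (div_pos (Upos_pos δ (qidx p.2)) h) (by norm_num : (2:ℝ)⁻¹ < 1)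
    refine ⟨n, ?_⟩
    have h2 : (2:ℝ)⁻¹ ^ (n+1) ≤ (2:ℝ)⁻¹ ^ n :=
      pow_le_pow_of_le_one (by norm_num) (by norm_num) (by omega)
    calc ((p.2:ℝ) - p.1) * (2:ℝ)⁻¹ ^ (n+1) ≤ ((p.2:ℝ) - p.1) * (2:ℝ)⁻¹ ^ n := by nlinarith
      _ < ((p.2:ℝ) - p.1) * (Upos δ (qidx p.2) / ((p.2:ℝ) - p.1)) := by nlinarith
      _ = Upos δ (qidx p.2) := by field_simp

def Kb (δ : ℕ → ℝ) (p : ℚ × ℚ) : ℕ := Classical.choose (exK δ p)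

lemma Kb_spec (δ : ℕ → ℝ) (p : ℚ × ℚ) :
    ((p.2 : ℝ) - (p.1 : ℝ)) * (2:ℝ)⁻¹ ^ (Kb δ p + 1) < Upos δ (qidx p.2) :=
  Classical.choose_spec (exK δ p)

/-- escape lemma: if `f n` is at least `Kb` of the current interval, then `eF f`
lands in `USet δ`. -/
lemma escape (δ : ℕ → ℝ) (f : ℕ → ℕ) (n : ℕ) (hK : Kb δ (iter f n) ≤ f n) :
    eF f ∈ USet δ := by
  set p := iter f n with hp
  set a := p.1
  set b := p.2
  have hab : a < b := iter_lt f n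
  set r := Upos δ (qidx b) with hr
  have hrpos : 0 < r := Upos_pos δ _
  have hc : eF f ≥ ((iter f (n+1)).1 : ℝ) := le_eF f (n+1)
  have hd : eF f ≤ ((iter f (n+1)).2 : ℝ) := eF_le f (n+1)
  have hdb : (iter f (n+1)).2 < b := step_right hab (f n)
  have hnear : (b : ℚ) - (iter f (n+1)).1 = (b - a) * (2:ℚ)⁻¹ ^ (f n + 1) := step_near (f n)
  have hmono : ((b:ℝ) - a) * (2:ℝ)⁻¹ ^ (f n + 1) ≤ ((b:ℝ) - a) * (2:ℝ)⁻¹ ^ (Kb δ p + 1) := by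
    have h1 : (2:ℝ)⁻¹ ^ (f n + 1) ≤ (2:ℝ)⁻¹ ^ (Kb δ p + 1) :=
      pow_le_pow_of_le_one (by norm_num) (by norm_num) (by omega)
    have hba : (0:ℝ) ≤ (b:ℝ) - a := by
      have : (a:ℝ) ≤ (b:ℝ) := by exact_mod_cast hab.le
      linarith
    nlinarith
  have hKs := Kb_spec δ p
  have hlt : ((b:ℝ)) - ((iter f (n+1)).1 : ℝ) < r := by
    have : ((b:ℝ)) - ((iter f (n+1)).1 : ℝ) = ((b:ℝ) - a) * (2:ℝ)⁻¹ ^ (f n + 1) := by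
      have := congrArg (Rat.cast (K := ℝ)) hnear
      push_cast at this ⊢
      linarith
    rw [this]
    exact lt_of_le_of_lt hmono hKs
  refine Set.mem_iUnion.2 ⟨qidx b, ?_⟩
  rw [qe_qidx]
  constructor
  · linarith
  · have : eF f < (b:ℝ) := lt_of_le_of_lt hd (by exact_mod_cast hdb)
    linarith

/-- the finite sets of reachable intervals, assuming escape never happened. -/
def Sfin (δ : ℕ → ℝ) : ℕ → Finset (ℚ × ℚ)
  | 0 => {((0:ℚ), (1:ℚ))}
  | n+1 => ((Sfin δ n) ×ˢ Finset.range ((Sfin δ n).sup fun p => Kb δ p + 1)).image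
      fun pk => step pk.1 pk.2

/-- the bounding function for `δ` -/
def gb (δ : ℕ → ℝ) (n : ℕ) : ℕ := (Sfin δ n).sup fun p => Kb δ p + 1

lemma not_mem_USet_bound {δ : ℕ → ℝ} {f : ℕ → ℕ} (h : eF f ∉ USet δ) :
    ∀ n, iter f n ∈ Sfin δ n ∧ f n < gb δ n := by
  intro n
  induction n with
  | zero =>
    have hmem : iter f 0 ∈ Sfin δ 0 := by simp [iter, Sfin]
    refine ⟨hmem, ?_⟩
    by_contra hc
    push_neg at hc
    have : Kb δ (iter f 0) + 1 ≤ gb δ 0 := Finset.le_sup (f := fun p => Kb δ p + 1) hmem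
    exact h (escape δ f 0 (by omega))
  | succ n ih =>
    obtain ⟨hmem, hbd⟩ := ih
    have hmem' : iter f (n+1) ∈ Sfin δ (n+1) := by
      show step (iter f n) (f n) ∈ _
      simp only [Sfin]
      exact Finset.mem_image.2 ⟨(iter f n, f n),
        Finset.mem_product.2 ⟨hmem, Finset.mem_range.2 hbd⟩, rfl⟩
    refine ⟨hmem', ?_⟩
    by_contra hc
    push_neg at hc
    have : Kb δ (iter f (n+1)) + 1 ≤ gb δ (n+1) :=
      Finset.le_sup (f := fun p => Kb δ p + 1) hmem'
    exact h (escape δ f (n+1) (by omega))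

lemma escapeU {δ : ℕ → ℝ} {f : ℕ → ℕ} (h : ∃ n, gb δ n ≤ f n) : eF f ∈ USet δ := by
  by_contra hc
  obtain ⟨n, hn⟩ := h
  exact absurd (not_mem_USet_bound hc n).2 (by omega)

end SMZ1


namespace SMZ1

lemma nondom (hd : domNumber = continuum) (G : Set (ℕ → ℕ)) (hG : #G < continuum) :
    ∃ f : ℕ → ℕ, ∀ h ∈ G, ∃ n, h n ≤ f n := by
  by_contra hc
  push_neg at hc
  have hdom : ∀ g : ℕ → ℕ, ∃ h ∈ G, EvDom g h := by
    intro g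
    obtain ⟨h, hG', hlt⟩ := hc g
    exact ⟨h, hG', Eventually.of_forall fun n => by have := hlt n; omega⟩
  have : domNumber ≤ #G := csInf_le' ⟨G, rfl, hdom⟩
  rw [hd] at this
  exact absurd hG (not_lt.2 this)

def pick (hd : domNumber = continuum) (G : Set (ℕ → ℕ)) : ℕ → ℕ :=
  if h : #G < continuum then (nondom hd G h).choose else fun _ => 0

lemma pick_spec (hd : domNumber = continuum) {G : Set (ℕ → ℕ)} (h : #G < continuum) :
    ∀ g ∈ G, ∃ n, g n ≤ pick hd G n := by
  rw [pick, dif_pos h]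
  exact (nondom hd G h).choose_spec

lemma mkI : #(ℕ → ℝ) = continuum := by
  rw [Cardinal.mk_arrow, Cardinal.mk_real]
  simp [Cardinal.continuum_power_aleph0]

section WO

variable (hd : domNumber = continuum) (r : (ℕ → ℝ) → (ℕ → ℝ) → Prop)
  (wo : IsWellOrder (ℕ → ℝ) r)

/-- the body set at stage `δ` -/
def Gset (δ : ℕ → ℝ) (IH : ∀ δ', r δ' δ → ℕ → ℕ) : Set (ℕ → ℕ) :=
  gb '' {δ' | r δ' δ ∨ δ' = δ} ∪
    Set.range fun x : {δ' // r δ' δ} => fun n => IH x.1 x.2 n + 1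

/-- the transfinite recursion -/
def FB : (ℕ → ℝ) → (ℕ → ℕ) :=
  wo.toIsWellFounded.wf.fix fun δ IH => pick hd (Gset r δ IH)

lemma FB_eq (δ : ℕ → ℝ) :
    FB hd r wo δ = pick hd (Gset r δ fun δ' _ => FB hd r wo δ') :=
  wo.toIsWellFounded.wf.fix_eq _ δ

variable (hseg : ∀ δ, #{δ' // r δ' δ} < continuum)

include hseg

lemma Gset_card (δ : ℕ → ℝ) (IH : ∀ δ', r δ' δ → ℕ → ℕ) :
    #(Gset r δ IH) < continuum := by
  have h1 : #(gb '' {δ' | r δ' δ ∨ δ' = δ} : Set (ℕ → ℕ)) < continuum := by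
    refine lt_of_le_of_lt Cardinal.mk_image_le ?_
    have heq : {δ' | r δ' δ ∨ δ' = δ} = insert δ {δ' | r δ' δ} := by
      ext x; simp [or_comm]
    rw [heq]
    refine lt_of_le_of_lt Cardinal.mk_insert_le ?_
    exact Cardinal.add_lt_of_lt aleph0_le_continuum (hseg δ)
      (lt_of_lt_of_le one_lt_aleph0 aleph0_le_continuum)
  have h2 : #(Set.range fun x : {δ' // r δ' δ} => fun n => IH x.1 x.2 n + 1) < continuum :=
    lt_of_le_of_lt Cardinal.mk_range_le (hseg δ)
  exact lt_of_le_of_lt (Cardinal.mk_union_le _ _)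
    (Cardinal.add_lt_of_lt aleph0_le_continuum h1 h2)

lemma FB_spec (δ : ℕ → ℝ) :
    ∀ g ∈ Gset r δ (fun δ' _ => FB hd r wo δ'), ∃ n, g n ≤ FB hd r wo δ n := by
  rw [FB_eq]
  exact pick_spec hd (Gset_card r hseg δ _)

lemma FB_gb {δ' δ : ℕ → ℝ} (h : r δ' δ ∨ δ' = δ) : ∃ n, gb δ' n ≤ FB hd r wo δ n :=
  FB_spec hd r wo hseg δ (gb δ') (Or.inl ⟨δ', h, rfl⟩)

lemma FB_ne {δ' δ : ℕ → ℝ} (h : r δ' δ) : FB hd r wo δ ≠ FB hd r wo δ' := by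
  obtain ⟨n, hn⟩ := FB_spec hd r wo hseg δ (fun n => FB hd r wo δ' n + 1)
    (Or.inr ⟨⟨δ', h⟩, rfl⟩)
  intro hc
  rw [hc] at hn
  omega

lemma FB_inj : Function.Injective (FB hd r wo) := by
  intro δ δ' hne
  by_contra hc
  rcases (haveI := wo; trichotomous_of r δ δ') with h | h | h
  · exact FB_ne hd r wo hseg h hne.symm
  · exact hc h
  · exact FB_ne hd r wo hseg h hne

end WO

end SMZ1

namespace SMZ1

lemma exists_concentrated (hd : domNumber = continuum) :
    ∃ X : Set ℝ, #X = continuum ∧ ∀ δ : ℕ → ℝ, #(X \ USet δ : Set ℝ) < continuum := by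
  obtain ⟨r, wo, hr⟩ := Cardinal.ord_eq (ℕ → ℝ)
  haveI := wo
  have hseg : ∀ δ, #{δ' // r δ' δ} < continuum := by
    intro δ
    calc #{δ' // r δ' δ} = (Ordinal.typein r δ).card := Ordinal.card_typein δ
      _ < #(ℕ → ℝ) := Cardinal.card_typein_lt δ hr
      _ = continuum := mkI
  refine ⟨Set.range fun δ => eF (FB hd r wo δ), ?_, ?_⟩
  · exact (Cardinal.mk_range_eq _ fun a b hab =>
      FB_inj hd r wo hseg (eF_injective hab)).trans mkI
  · intro δ₀
    have hsub : (Set.range fun δ => eF (FB hd r wo δ)) \ USet δ₀ ⊆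
        (fun δ => eF (FB hd r wo δ)) '' {δ | r δ δ₀} := by
      rintro z ⟨⟨δ, rfl⟩, hz⟩
      refine ⟨δ, ?_, rfl⟩
      rcases (haveI := wo; trichotomous_of r δ δ₀) with h | h | h
      · exact h
      · exact absurd (escapeU (FB_gb hd r wo hseg (Or.inr h.symm))) hz
      · exact absurd (escapeU (FB_gb hd r wo hseg (Or.inl h))) hz
    calc #((Set.range fun δ => eF (FB hd r wo δ)) \ USet δ₀ : Set ℝ)
        ≤ #((fun δ => eF (FB hd r wo δ)) '' {δ | r δ δ₀} : Set ℝ) :=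
          Cardinal.mk_le_mk_of_subset hsub
      _ ≤ #{δ | r δ δ₀} := Cardinal.mk_image_le
      _ < continuum := hseg δ₀

end SMZ1

theorem stmt1
    (hSMZ : ∀ X : Set ℝ, #X < continuum → HasStrongMeasureZero X)
    (hd : domNumber = continuum) :
    ∃ X : Set ℝ, HasStrongMeasureZero X ∧ #X = continuum := by
  obtain ⟨X, hX, hconc⟩ := SMZ1.exists_concentrated hd
  refine ⟨X, ?_, hX⟩
  intro ε hε
  set δ : ℕ → ℝ := fun i => ε (2*i) with hδ
  obtain ⟨y, hy⟩ := hSMZ _ (hconc δ) (fun i => ε (2*i+1)) (fun i => hε _)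
  refine ⟨fun m => if m % 2 = 0 then ((SMZ1.qe (m/2) : ℝ)) else y (m/2), ?_⟩
  intro z hz
  by_cases hzU : z ∈ SMZ1.USet δ
  · obtain ⟨i, hi⟩ := Set.mem_iUnion.1 hzU
    refine Set.mem_iUnion.2 ⟨2*i, ?_⟩
    have h0 : (2*i) % 2 = 0 := by omega
    have h1 : (2*i) / 2 = i := by omega
    have h2 : SMZ1.Upos δ i = ε (2*i) := SMZ1.Upos_eq (fun j => hε _) i
    rw [h2] at hi
    simpa only [h0, h1, if_pos] using hi
  · obtain ⟨i, hi⟩ := Set.mem_iUnion.1 (hy ⟨hz, hzU⟩)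
    refine Set.mem_iUnion.2 ⟨2*i+1, ?_⟩
    have h0 : ¬((2*i+1) % 2 = 0) := by omega
    have h1 : (2*i+1) / 2 = i := by omega
    simpa only [h0, h1, if_neg, ite_false] using hi
end
end

section
/- If 𝒰 is a P-point ultrafilter on ω, then the player 'NOTIN' has no winning strategy in the P-point game G(𝒰): in each round n, NOTIN plays a set A_n ∈ 𝒰 and IN plays a finite set a_n ⊆ A_n; IN wins if ⋃_n a_n ∈ 𝒰. -/
/-- `U` is a P-point: for every sequence of sets in `U` there is a set in `U`
almost contained in each of them. -/
def IsPPoint (U : Ultrafilter ℕ) : Prop :=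
  ∀ A : ℕ → Set ℕ, (∀ n, A n ∈ U) → ∃ B ∈ U, ∀ n, (B \ A n).Finite

/-- Auxiliary: given the key boundedness property of `B` relative to the
strategy `σ` along a scale `n`, the blocks of `B` selected by `g` cannot have
union in `U`. -/
lemma aux_play (U : Ultrafilter ℕ) (σ : List (Set ℕ) → Set ℕ)
    (hwin : ∀ a : ℕ → Set ℕ,
      (∀ k, (a k).Finite ∧ a k ⊆ σ (List.ofFn fun i : Fin k => a i)) →
      (⋃ k, a k) ∉ U)
    (B : Set ℕ) (n : ℕ → ℕ) (hmono : Monotone n)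
    (key : ∀ (j : ℕ) (l : List (Set ℕ)), l.length ≤ j →
      (∀ s ∈ l, s ⊆ Set.Iio (n j)) → B \ σ l ⊆ Set.Iio (n (j + 1)))
    (g : ℕ → ℕ) (hlen : ∀ k, k ≤ g k) (hg : ∀ i k, i < k → g i + 2 ≤ g k) :
    (B ∩ ⋃ k, Set.Ico (n (g k + 1)) (n (g k + 2))) ∉ U := by
  intro hmem
  set a : ℕ → Set ℕ := fun k => B ∩ Set.Ico (n (g k + 1)) (n (g k + 2)) with ha
  refine hwin a (fun k => ⟨?_, ?_⟩) ?_
  · exact (Set.finite_Ico _ _).inter_of_right _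
  · -- legality of move `a k`
    intro x hx
    by_contra hxσ
    have hkey := key (g k) (List.ofFn fun i : Fin k => a i)
      (by simpa using hlen k) ?_ ⟨hx.1, hxσ⟩
    · exact absurd hx.2.1 (not_le_of_gt hkey)
    · intro s hs
      rw [List.mem_ofFn] at hs
      obtain ⟨i, rfl⟩ := hs
      intro y hy
      have : y < n (g i.1 + 2) := hy.2.2
      exact lt_of_lt_of_le this (hmono (hg i.1 k i.2))
  · have : (⋃ k, a k) = B ∩ ⋃ k, Set.Ico (n (g k + 1)) (n (g k + 2)) := by
      simp only [ha, Set.inter_iUnion]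
    rw [this]
    exact hmem

/-- If `U` is a P-point, then player NOTIN has no winning strategy in the
P-point game `G(U)`: a strategy `σ` assigns to each finite history of IN's
moves a set in `U`; in a play, IN's move `a n` must be a finite subset of
NOTIN's set `σ ⟨a 0, …, a (n-1)⟩`; IN wins if `⋃ n, a n ∈ U`. -/
theorem stmt7 (U : Ultrafilter ℕ) (hU : IsPPoint U) :
    ¬ ∃ σ : List (Set ℕ) → Set ℕ,
        (∀ l : List (Set ℕ), σ l ∈ U) ∧
        ∀ a : ℕ → Set ℕ,
          (∀ n, (a n).Finite ∧ a n ⊆ σ (List.ofFn fun i : Fin n => a i)) →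
          (⋃ n, a n) ∉ U := by
  rintro ⟨σ, hσU, hwin⟩
  by_cases hpure : ∃ x : ℕ, U = pure x
  · -- principal case: IN plays `{x}` forever
    obtain ⟨x, rfl⟩ := hpure
    refine hwin (fun _ => {x}) (fun k => ⟨Set.finite_singleton x, ?_⟩) ?_
    · intro y hy
      rcases hy with rfl
      have := hσU (List.ofFn fun i : Fin k => ({y} : Set ℕ))
      rwa [Ultrafilter.mem_pure] at this
    · rw [Set.iUnion_const, Ultrafilter.mem_pure]
      exact rfl
  -- free case
  have hfin : ∀ s : Set ℕ, s.Finite → s ∉ U := by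
    intro s hs hsU
    obtain ⟨x, -, hx⟩ := Ultrafilter.eq_pure_of_finite_mem hs hsU
    exact hpure ⟨x, hx⟩
  -- the sets of admissible short histories with small entries
  set Lset : ℕ → Set (List (Set ℕ)) :=
    fun m => {l | l.length ≤ m ∧ ∀ s ∈ l, s ⊆ Set.Iio m} with hLset
  have hLfin : ∀ m, (Lset m).Finite := by
    intro m
    have hS : ({t : Set ℕ | t ⊆ Set.Iio m}).Finite :=
      (Set.finite_Iio m).finite_subsets
    haveI := hS.to_subtype
    have : Lset m ⊆ (fun l : List ({t : Set ℕ | t ⊆ Set.Iio m}) =>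
        l.map Subtype.val) '' {l | l.length ≤ m} := by
      rintro l ⟨hlen, hmem⟩
      refine ⟨l.pmap (fun s h => ⟨s, h⟩) hmem, by simpa using hlen, ?_⟩
      show List.map Subtype.val (List.pmap (fun s h => ⟨s, h⟩) l hmem) = l
      clear hlen
      induction l with
      | nil => rfl
      | cons hd tl ih =>
        simp only [List.pmap, List.map_cons]
        exact congrArg _ (ih _)
    exact (((List.finite_length_le _ m).image _).subset this)
  set A : ℕ → Set ℕ := fun m => ⋂ l ∈ Lset m, σ l with hA
  have hAU : ∀ m, A m ∈ U := fun m =>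
    (Filter.biInter_mem (hLfin m)).mpr fun l _ => hσU l
  have hAsub : ∀ m l, l ∈ Lset m → A m ⊆ σ l := fun m l hl =>
    Set.biInter_subset_of_mem hl
  obtain ⟨B, hBU, hBfin⟩ := hU A hAU
  -- bounds
  have spec : ∀ N : ℕ, ∃ m, B \ A N ⊆ Set.Iio m := by
    intro N
    obtain ⟨ub, hub⟩ := (hBfin N).bddAbove
    exact ⟨ub + 1, fun x hx => Nat.lt_succ_of_le (hub hx)⟩
  -- the scale
  set n : ℕ → ℕ := fun j =>
    Nat.rec 0 (fun j nj => max (nj + 1) (Classical.choose (spec (max nj j + 1)))) j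
    with hn
  have hnsucc : ∀ j, n (j + 1) =
      max (n j + 1) (Classical.choose (spec (max (n j) j + 1))) := fun j => rfl
  have hmono : StrictMono n := by
    apply strictMono_nat_of_lt_succ
    intro j
    rw [hnsucc j]
    exact lt_of_lt_of_le (Nat.lt_succ_self _) (le_max_left _ _)
  have key : ∀ (j : ℕ) (l : List (Set ℕ)), l.length ≤ j →
      (∀ s ∈ l, s ⊆ Set.Iio (n j)) → B \ σ l ⊆ Set.Iio (n (j + 1)) := by
    intro j l hlen hsmall
    set N := max (n j) j + 1 with hN
    have hlL : l ∈ Lset N := by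
      constructor
      · exact hlen.trans ((le_max_right _ _).trans (Nat.le_succ _))
      · intro s hs
        exact (hsmall s hs).trans
          (Set.Iio_subset_Iio ((le_max_left _ _).trans (Nat.le_succ _)))
    have h1 : B \ σ l ⊆ B \ A N := fun x hx => ⟨hx.1, fun hA => hx.2 (hAsub N l hlL hA)⟩
    have h2 : B \ A N ⊆ Set.Iio (Classical.choose (spec N)) := Classical.choose_spec (spec N)
    refine (h1.trans h2).trans (Set.Iio_subset_Iio ?_)
    rw [hnsucc j]
    exact le_max_right _ _
  -- the two forbidden unions and the finite initial part
  have hE : (B ∩ ⋃ k, Set.Ico (n (2 * k + 1)) (n (2 * k + 2))) ∉ U :=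
    aux_play U σ hwin B n hmono.monotone key (fun k => 2 * k)
      (fun k => by show k ≤ 2 * k; omega) (fun i k h => by show 2 * i + 2 ≤ 2 * k; omega)
  have hO : (B ∩ ⋃ k, Set.Ico (n (2 * k + 2)) (n (2 * k + 3))) ∉ U := by
    have := aux_play U σ hwin B n hmono.monotone key (fun k => 2 * k + 1)
      (fun k => by show k ≤ 2 * k + 1; omega)
      (fun i k h => by show 2 * i + 1 + 2 ≤ 2 * k + 1; omega)
    simpa using this
  have hI : (B ∩ Set.Iio (n 1)) ∉ U :=
    hfin _ ((Set.finite_Iio _).inter_of_right _)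
  -- but the three sets cover B
  have hcover : B ⊆ (B ∩ Set.Iio (n 1)) ∪
      ((B ∩ ⋃ k, Set.Ico (n (2 * k + 1)) (n (2 * k + 2))) ∪
       (B ∩ ⋃ k, Set.Ico (n (2 * k + 2)) (n (2 * k + 3)))) := by
    intro x hxB
    by_cases hx1 : x < n 1
    · exact Or.inl ⟨hxB, hx1⟩
    push_neg at hx1
    -- find the greatest j with n j ≤ x
    set j := Nat.findGreatest (fun j => n j ≤ x) x with hj
    have hx1' : (1 : ℕ) ≤ x := le_trans hmono.le_apply hx1
    have hjge : 1 ≤ j := Nat.le_findGreatest hx1' hx1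
    have hjle : n j ≤ x := Nat.findGreatest_spec (P := fun j => n j ≤ x) hx1' hx1
    have hjgt : x < n (j + 1) := by
      by_contra hcon
      push_neg at hcon
      by_cases hle : j + 1 ≤ x
      · exact Nat.findGreatest_is_greatest (Nat.lt_succ_self j) hle hcon
      · push_neg at hle
        have : j + 1 ≤ n (j + 1) := hmono.le_apply
        omega
    obtain ⟨m, hm⟩ := Nat.exists_eq_add_of_le hjge
    rw [hm] at hjle hjgt
    rcases Nat.even_or_odd m with ⟨k, hk⟩ | ⟨k, hk⟩
    · refine Or.inr (Or.inl ⟨hxB, Set.mem_iUnion.2 ⟨k, ?_⟩⟩)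
      constructor
      · have : 2 * k + 1 = 1 + m := by omega
        rw [this]; exact hjle
      · have : 2 * k + 2 = 1 + m + 1 := by omega
        rw [this]; exact hjgt
    · refine Or.inr (Or.inr ⟨hxB, Set.mem_iUnion.2 ⟨k, ?_⟩⟩)
      constructor
      · have : 2 * k + 2 = 1 + m := by omega
        rw [this]; exact hjle
      · have : 2 * k + 3 = 1 + m + 1 := by omega
        rw [this]; exact hjgt
  have hmem : (B ∩ Set.Iio (n 1)) ∪
      ((B ∩ ⋃ k, Set.Ico (n (2 * k + 1)) (n (2 * k + 2))) ∪
       (B ∩ ⋃ k, Set.Ico (n (2 * k + 2)) (n (2 * k + 3)))) ∈ U :=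
    Filter.mem_of_superset hBU hcover
  rcases (Ultrafilter.union_mem_iff.mp hmem) with h | h
  · exact hI h
  rcases (Ultrafilter.union_mem_iff.mp h) with h | h
  · exact hE h
  · exact hO h
end

section
/- (Fusion) If ⟨p_n : n ∈ ω⟩ is a sequence of H-perfect trees with p_0 ≤_1 p_1 ≤_2 p_2 ≤_3 ⋯ (i.e., p_n ⊇ p_{n+1} and split_{n+1}(p_n) ⊆ p_{n+1}), then p_∞ = ⋂_n p_n is an H-perfect tree, and p_n ≤_{n+1} p_∞ for every n. -/
/-- A (nonempty, downward-closed) tree of finite sequences of naturals. -/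
def IsTree (p : Set (List ℕ)) : Prop :=
  p.Nonempty ∧ ∀ η ∈ p, ∀ ζ : List ℕ, ζ <+: η → ζ ∈ p

/-- The set of immediate successors of `η` in `p`. -/
def succs (p : Set (List ℕ)) (η : List ℕ) : Set ℕ := {i | η ++ [i] ∈ p}

/-- `p` is an `H`-perfect tree. -/
def IsHPerfect (H : ℕ → ℕ) (p : Set (List ℕ)) : Prop :=
  IsTree p ∧
  (∀ η ∈ p, ∀ l : Fin η.length, η.get l < H l) ∧
  (∀ η ∈ p, (succs p η).encard = 1 ∨ (succs p η).encard = (H η.length : ℕ∞)) ∧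
  (∀ η ∈ p, ∃ ν ∈ p, η <+: ν ∧ (succs p ν).encard = (H ν.length : ℕ∞))

/-- `η` is a splitting node of `p`. -/
def IsSplitNode (p : Set (List ℕ)) (η : List ℕ) : Prop :=
  η ∈ p ∧ 1 < (succs p η).encard

/-- The splitting height of `η` in `p`: the number of splitting nodes strictly
below `η`. -/
noncomputable def splitHt (p : Set (List ℕ)) (η : List ℕ) : ℕ :=
  {ν | IsSplitNode p ν ∧ ν <+: η ∧ ν ≠ η}.ncard

/-- The `n`-th splitting level of `p`. -/
def splitN (p : Set (List ℕ)) (n : ℕ) : Set (List ℕ) :=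
  {η | IsSplitNode p η ∧ splitHt p η = n}

/-- `leN n p q` (written `p ≤ₙ q`): `q` is a stronger condition than `p`
(i.e. `q ⊆ p`) containing the `n`-th splitting level of `p`. -/
def leN (n : ℕ) (p q : Set (List ℕ)) : Prop := q ⊆ p ∧ splitN p n ⊆ q

-- basic lemmas
lemma prefixes_finite (η : List ℕ) : {ζ : List ℕ | ζ <+: η}.Finite := by
  apply Set.Finite.ofFinset η.inits.toFinset
  intro ζ; simp [List.mem_inits]

lemma splitBelow_finite (p : Set (List ℕ)) (η : List ℕ) :
    {ν | IsSplitNode p ν ∧ ν <+: η ∧ ν ≠ η}.Finite :=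
  (prefixes_finite η).subset (fun ν hν => hν.2.1)

lemma nil_mem {p : Set (List ℕ)} (hp : IsTree p) : [] ∈ p := by
  obtain ⟨x, hx⟩ := hp.1
  exact hp.2 x hx [] List.nil_prefix

lemma split_encard {H : ℕ → ℕ} {p : Set (List ℕ)} (hp : IsHPerfect H p) {η : List ℕ}
    (h : IsSplitNode p η) : (succs p η).encard = (H η.length : ℕ∞) := by
  rcases hp.2.2.1 η h.1 with h1 | h1
  · exfalso; have h2 := h.2; rw [h1] at h2; exact lt_irrefl _ h2
  · exact h1

lemma split_of_concard {H : ℕ → ℕ} (hH : ∀ n, 2 ≤ H n) {p : Set (List ℕ)} {η : List ℕ}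
    (hη : η ∈ p) (h : (succs p η).encard = (H η.length : ℕ∞)) : IsSplitNode p η := by
  refine ⟨hη, ?_⟩
  rw [h]
  exact_mod_cast Nat.lt_of_lt_of_le one_lt_two (hH η.length)

lemma splitHt_lt {p : Set (List ℕ)} {ζ η : List ℕ} (hζ : IsSplitNode p ζ)
    (hpre : ζ <+: η) (hne : ζ ≠ η) : splitHt p ζ < splitHt p η := by
  apply Set.ncard_lt_ncard _ (splitBelow_finite p η)
  constructor
  · rintro ξ ⟨hs, hp1, hp2⟩
    have hlt : ξ.length < ζ.length := lt_of_le_of_ne hp1.length_le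
      (fun h => hp2 (List.IsPrefix.eq_of_length hp1 h))
    refine ⟨hs, hp1.trans hpre, fun h => ?_⟩
    subst h
    exact absurd hpre.length_le (not_le.mpr hlt)
  · intro hsub
    have : ζ ∈ {ν | IsSplitNode p ν ∧ ν <+: ζ ∧ ν ≠ ζ} := hsub ⟨hζ, hpre, hne⟩
    exact this.2.2 rfl

lemma splitHt_mono {p q : Set (List ℕ)} (hqp : q ⊆ p) (η : List ℕ) :
    splitHt q η ≤ splitHt p η := by
  apply Set.ncard_le_ncard _ (splitBelow_finite p η)
  rintro ν ⟨⟨hν, hcard⟩, h2, h3⟩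
  exact ⟨⟨hqp hν, lt_of_lt_of_le hcard (Set.encard_mono (fun i hi => hqp hi))⟩, h2, h3⟩

lemma succs_nonempty {H : ℕ → ℕ} (hH : ∀ n, 2 ≤ H n) {p : Set (List ℕ)}
    (hp : IsHPerfect H p) {η : List ℕ} (hη : η ∈ p) : (succs p η).Nonempty := by
  obtain ⟨ν, hν, hpre, hcard⟩ := hp.2.2.2 η hη
  rcases eq_or_ne η ν with rfl | hne
  · rw [← Set.encard_ne_zero, hcard]
    simp only [ne_eq, Nat.cast_eq_zero]
    have := hH η.length
    omega
  · obtain ⟨t, rfl⟩ := hpre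
    have ht : t ≠ [] := by rintro rfl; simp at hne
    refine ⟨t.head ht, ?_⟩
    have : η ++ [t.head ht] <+: η ++ t := by
      refine ⟨t.tail, ?_⟩
      simp [List.cons_head_tail]
    exact hp.1.2 _ hν _ this

lemma prefix_concat_cases {η ζ : List ℕ} {i : ℕ} (h : ζ <+: η ++ [i]) :
    ζ = η ++ [i] ∨ ζ <+: η := by
  rcases eq_or_ne ζ (η ++ [i]) with rfl | hne
  · exact Or.inl rfl
  · right
    have hlt : ζ.length < (η ++ [i]).length :=
      lt_of_le_of_ne h.length_le (fun he => hne (h.eq_of_length he))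
    simp at hlt
    exact List.prefix_of_prefix_length_le h (List.prefix_append η [i]) (by omega)

lemma splitHt_concat {p : Set (List ℕ)} {η : List ℕ} (hη : IsSplitNode p η) (i : ℕ) :
    splitHt p (η ++ [i]) = splitHt p η + 1 := by
  have hset : {ν | IsSplitNode p ν ∧ ν <+: η ++ [i] ∧ ν ≠ η ++ [i]} =
      insert η {ν | IsSplitNode p ν ∧ ν <+: η ∧ ν ≠ η} := by
    ext ζ
    simp only [Set.mem_setOf_eq, Set.mem_insert_iff]
    constructor
    · rintro ⟨hs, hpre, hne⟩
      rcases prefix_concat_cases hpre with rfl | hpre'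
      · exact absurd rfl hne
      · rcases eq_or_ne ζ η with rfl | hne'
        · exact Or.inl rfl
        · exact Or.inr ⟨hs, hpre', hne'⟩
    · rintro (rfl | ⟨hs, hpre, hne⟩)
      · refine ⟨hη, List.prefix_append _ _, fun h => by simp at h⟩
      · refine ⟨hs, hpre.trans (List.prefix_append _ _), fun h => ?_⟩
        subst h
        have := hpre.length_le
        simp at this
    
  rw [splitHt, hset, Set.ncard_insert_of_notMem (fun h => h.2.2 rfl)
    (splitBelow_finite p η), splitHt]

/-- minimal split node above η -/
lemma exists_min_split {H : ℕ → ℕ} (hH : ∀ n, 2 ≤ H n) {p : Set (List ℕ)}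
    (hp : IsHPerfect H p) {η : List ℕ} (hη : η ∈ p) :
    ∃ ν, η <+: ν ∧ IsSplitNode p ν ∧ splitHt p ν = splitHt p η := by
  have hex : ∃ n, ∃ ν, η <+: ν ∧ IsSplitNode p ν ∧ ν.length = n := by
    obtain ⟨ν, hν, hpre, hcard⟩ := hp.2.2.2 η hη
    exact ⟨ν.length, ν, hpre, split_of_concard hH hν hcard, rfl⟩
  classical
  obtain ⟨ν, hpre, hsplit, hlen⟩ := Nat.find_spec hex
  refine ⟨ν, hpre, hsplit, ?_⟩
  have hmin : ∀ ζ, η <+: ζ → IsSplitNode p ζ → ν.length ≤ ζ.length := by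
    intro ζ h1 h2
    rw [hlen]
    exact Nat.find_min' hex ⟨ζ, h1, h2, rfl⟩
  rcases eq_or_ne η ν with rfl | hne
  · rfl
  -- η is not split (else minimality forces ν = η)
  have hηns : ¬ IsSplitNode p η := by
    intro hs
    have := hmin η (List.prefix_refl η) hs
    exact hne (hpre.eq_of_length (le_antisymm hpre.length_le this))
  unfold splitHt
  congr 1
  ext ζ
  simp only [Set.mem_setOf_eq]
  constructor
  · rintro ⟨hs, h1, h2⟩
    have hl : ζ.length < ν.length :=
      lt_of_le_of_ne h1.length_le (fun he => h2 (h1.eq_of_length he))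
    rcases List.prefix_or_prefix_of_prefix h1 hpre with h | h
    · -- ζ <+: η
      refine ⟨hs, h, fun he => hηns (he ▸ hs)⟩
    · -- η <+: ζ : contradicts minimality
      exact absurd (hmin ζ h hs) (not_le.mpr hl)
  · rintro ⟨hs, h1, h2⟩
    refine ⟨hs, h1.trans hpre, fun he => ?_⟩
    subst he
    have h3 : η.length < ζ.length :=
      lt_of_le_of_ne hpre.length_le (fun he => hne (hpre.eq_of_length he))
    exact absurd h1.length_le (not_le.mpr h3)

lemma climb {H : ℕ → ℕ} (hH : ∀ n, 2 ≤ H n) {p : Set (List ℕ)}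
    (hp : IsHPerfect H p) {η : List ℕ} (hη : η ∈ p) :
    ∀ j, splitHt p η ≤ j → ∃ ν, η <+: ν ∧ ν ∈ splitN p j := by
  have key : ∀ d : ℕ, ∀ η, η ∈ p → ∃ ν, η <+: ν ∧ ν ∈ splitN p (splitHt p η + d) := by
    intro d
    induction d with
    | zero =>
      intro η hη
      obtain ⟨ν, h1, h2, h3⟩ := exists_min_split hH hp hη
      exact ⟨ν, h1, h2, by omega⟩
    | succ d ih =>
      intro η hη
      obtain ⟨ν, h1, h2, h3⟩ := exists_min_split hH hp hη
      obtain ⟨i, hi⟩ := succs_nonempty hH hp h2.1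
      have hνi : ν ++ [i] ∈ p := hi
      obtain ⟨ν', h1', h2'⟩ := ih (ν ++ [i]) hνi
      refine ⟨ν', (h1.trans (List.prefix_append _ _)).trans h1', ?_⟩
      rwa [splitHt_concat h2, h3, Nat.add_right_comm] at h2'
  intro j hj
  obtain ⟨ν, h1, h2⟩ := key (j - splitHt p η) η hη
  rw [Nat.add_sub_cancel' hj] at h2
  exact ⟨ν, h1, h2⟩

lemma mem_of_le {H : ℕ → ℕ} (hH : ∀ n, 2 ≤ H n) {p q : Set (List ℕ)}
    (hp : IsHPerfect H p) (hqt : IsTree q) {n : ℕ} (hspl : splitN p (n + 1) ⊆ q)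
    {η : List ℕ} (hη : η ∈ p) (hht : splitHt p η ≤ n + 1) : η ∈ q := by
  obtain ⟨ν, h1, h2⟩ := climb hH hp hη (n + 1) hht
  exact hqt.2 ν (hspl h2) η h1

lemma split_preserved {H : ℕ → ℕ} (hH : ∀ n, 2 ≤ H n) {p q : Set (List ℕ)}
    (hp : IsHPerfect H p) (hq : IsHPerfect H q) (hsub : q ⊆ p) {n : ℕ}
    (hspl : splitN p (n + 1) ⊆ q) :
    ∀ m, m ≤ n → ∀ η ∈ splitN p m, succs q η = succs p η ∧ η ∈ splitN q m := by
  intro m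
  induction m using Nat.strong_induction_on with
  | _ m ih =>
    intro hmn η hη
    obtain ⟨hsp, hht⟩ := hη
    have hsucc : succs q η = succs p η := by
      refine Set.Subset.antisymm (fun i hi => hsub hi) ?_
      intro i hi
      have hmem : η ++ [i] ∈ p := hi
      have hht' : splitHt p (η ++ [i]) ≤ n + 1 := by
        rw [splitHt_concat hsp, hht]; omega
      exact mem_of_le hH hp hq.1 hspl hmem hht'
    have hηq : η ∈ q := by
      apply mem_of_le hH hp hq.1 hspl hsp.1
      omega
    have hsq : IsSplitNode q η := ⟨hηq, by rw [hsucc]; exact hsp.2⟩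
    refine ⟨hsucc, hsq, ?_⟩
    rw [← hht]
    unfold splitHt
    congr 1
    ext ζ
    simp only [Set.mem_setOf_eq]
    constructor
    · rintro ⟨hs, h1, h2⟩
      refine ⟨⟨hsub hs.1, lt_of_lt_of_le hs.2 (Set.encard_mono (fun i hi => hsub hi))⟩, h1, h2⟩
    · rintro ⟨hs, h1, h2⟩
      have hlt : splitHt p ζ < m := hht ▸ splitHt_lt hs h1 h2
      have := (ih (splitHt p ζ) hlt (by omega) ζ ⟨hs, rfl⟩).2
      exact ⟨this.1, h1, h2⟩


theorem stmt14 (H : ℕ → ℕ) (hH : ∀ n, 2 ≤ H n) (p : ℕ → Set (List ℕ))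
    (hp : ∀ n, IsHPerfect H (p n))
    (hfus : ∀ n, leN (n + 1) (p n) (p (n + 1))) :
    IsHPerfect H (⋂ n, p n) ∧ ∀ n, leN (n + 1) (p n) (⋂ k, p k) := by
  -- the chain is decreasing
  have pmono : ∀ j k : ℕ, j ≤ k → p k ⊆ p j := by
    intro j k hjk
    induction k, hjk using Nat.le_induction with
    | base => exact subset_rfl
    | succ k hjk ih => exact (hfus k).1.trans ih
  -- splitting nodes of level m ≤ k of p k persist with the same successors
  have key : ∀ k m, m ≤ k → ∀ η ∈ splitN (p k) m, ∀ j, k ≤ j →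
      η ∈ splitN (p j) m ∧ succs (p j) η = succs (p k) η := by
    intro k m hmk η hη j hkj
    induction j, hkj using Nat.le_induction with
    | base => exact ⟨hη, rfl⟩
    | succ j hkj ih =>
      obtain ⟨ih1, ih2⟩ := ih
      have h := split_preserved hH (hp j) (hp (j + 1)) (hfus j).1 (hfus j).2 m
        (le_trans hmk hkj) η ih1
      exact ⟨h.2, h.1.trans ih2⟩
  -- membership persistence
  have memkey : ∀ k (η : List ℕ), η ∈ p k → splitHt (p k) η ≤ k + 1 → ∀ j, η ∈ p j := by
    intro k η hη hht j
    rcases le_or_gt j k with h | h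
    · exact pmono j k h hη
    have : ∀ j, k ≤ j → η ∈ p j ∧ splitHt (p j) η ≤ k + 1 := by
      intro j hkj
      induction j, hkj using Nat.le_induction with
      | base => exact ⟨hη, hht⟩
      | succ j hkj ih =>
        obtain ⟨ih1, ih2⟩ := ih
        obtain ⟨ν, h1, h2⟩ := climb hH (hp j) ih1 (j + 1) (by omega)
        have hνq : ν ∈ p (j + 1) := (hfus j).2 h2
        refine ⟨(hp (j + 1)).1.2 ν hνq η h1, ?_⟩
        exact le_trans (splitHt_mono (hfus j).1 η) ih2
    exact (this j (le_of_lt h)).1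
  have hPtree : IsTree (⋂ n, p n) := by
    constructor
    · exact ⟨[], Set.mem_iInter.mpr fun n => nil_mem (hp n).1⟩
    · intro η hη ζ hζ
      exact Set.mem_iInter.mpr fun n => (hp n).1.2 η (Set.mem_iInter.mp hη n) ζ hζ
  -- successor sets in the intersection
  have hsucc_eq : ∀ (η : List ℕ), (∀ n, η ∈ p n) →
      ∀ k m, m ≤ k → η ∈ splitN (p k) m → succs (⋂ n, p n) η = succs (p k) η := by
    intro η hη k m hmk hsp
    ext i
    simp only [succs, Set.mem_setOf_eq, Set.mem_iInter]
    constructor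
    · intro h; exact h k
    · intro h j
      rcases le_or_gt j k with hjk | hjk
      · exact pmono j k hjk h
      · have := (key k m hmk η hsp j (le_of_lt hjk)).2
        have hi : i ∈ succs (p k) η := h
        rw [← this] at hi
        exact hi
  constructor
  · refine ⟨hPtree, ?_, ?_, ?_⟩
    · intro η hη l
      exact (hp 0).2.1 η (Set.mem_iInter.mp hη 0) l
    · -- each node has 1 or H successors
      intro η hη
      have hηn : ∀ n, η ∈ p n := Set.mem_iInter.mp hη
      set k := splitHt (p 0) η with hk
      have hhtk : splitHt (p k) η ≤ k := splitHt_mono (pmono 0 k (Nat.zero_le k)) η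
      by_cases hsp : IsSplitNode (p k) η
      · right
        rw [hsucc_eq η hηn k (splitHt (p k) η) hhtk ⟨hsp, rfl⟩]
        exact split_encard (hp k) hsp
      · left
        have h1 : (succs (p k) η).encard = 1 := by
          rcases (hp k).2.2.1 η (hηn k) with h | h
          · exact h
          · exact absurd (split_of_concard hH (hηn k) h) hsp
        obtain ⟨i, hi⟩ := Set.encard_eq_one.mp h1
        rw [Set.encard_eq_one]
        refine ⟨i, Set.Subset.antisymm ?_ ?_⟩
        · intro x hx
          have : x ∈ succs (p k) η := (Set.mem_iInter.mp hx) k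
          rwa [hi] at this
        · rintro x rfl
          simp only [succs, Set.mem_setOf_eq, Set.mem_iInter]
          intro j
          rcases le_or_gt j k with hjk | hjk
          · have : x ∈ succs (p k) η := by rw [hi]; rfl
            exact pmono j k hjk this
          · have hne := succs_nonempty hH (hp j) (hηn j)
            have hsub : succs (p j) η ⊆ succs (p k) η :=
              fun y hy => pmono k j (le_of_lt hjk) hy
            obtain ⟨y, hy⟩ := hne
            have : y ∈ ({x} : Set ℕ) := hi ▸ hsub hy
            rw [Set.mem_singleton_iff] at this
            subst this
            exact hy
    · -- splitting nodes cofinal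
      intro η hη
      have hηn : ∀ n, η ∈ p n := Set.mem_iInter.mp hη
      set k := splitHt (p 0) η with hk
      have hhtk : splitHt (p k) η ≤ k := splitHt_mono (pmono 0 k (Nat.zero_le k)) η
      obtain ⟨ν, h1, h2⟩ := climb hH (hp k) (hηn k) (splitHt (p k) η) le_rfl
      have hνht : splitHt (p k) ν = splitHt (p k) η := h2.2
      have hνAll : ∀ n, ν ∈ p n := memkey k ν h2.1.1 (by rw [hνht]; omega)
      have hνsucc : succs (⋂ n, p n) ν = succs (p k) ν :=
        hsucc_eq ν hνAll k (splitHt (p k) η) (by omega) h2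
      exact ⟨ν, Set.mem_iInter.mpr hνAll, h1, by rw [hνsucc]; exact split_encard (hp k) h2.1⟩
  · intro n
    refine ⟨Set.iInter_subset _ n, ?_⟩
    intro η hη
    exact Set.mem_iInter.mpr (memkey n η hη.1.1 (le_of_eq hη.2))
end

section
/- If p is an H-perfect tree, n ∈ ω, and for each η ∈ split_n(p) we are given an H-perfect tree q_η with q_η ⊆ p^{[η]} (the restriction of p to nodes comparable with η), then q := ⋃_{η ∈ split_n(p)} q_η is an H-perfect tree, p ≤_n q, and q^{[η]} = q_η for each η ∈ split_n(p). -/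
/-- `restr p η = p^[η]`: the nodes of `p` comparable with `η`. -/
def restr (p : Set (List ℕ)) (η : List ℕ) : Set (List ℕ) :=
  {ν ∈ p | η <+: ν ∨ ν <+: η}

namespace Stmt15Aux

lemma prefix_finite (η : List ℕ) : {ν : List ℕ | ν <+: η}.Finite := by
  apply (Set.finite_range fun k : Fin (η.length + 1) => η.take k.val).subset
  rintro ν hν
  have hl := hν.length_le
  exact ⟨⟨ν.length, by omega⟩, (List.prefix_iff_eq_take.mp hν).symm⟩

lemma below_finite (p : Set (List ℕ)) (η : List ℕ) :
    {ν | IsSplitNode p ν ∧ ν <+: η ∧ ν ≠ η}.Finite :=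
  (prefix_finite η).subset fun _ hν => hν.2.1

lemma strict_prefix_length {ν η : List ℕ} (h : ν <+: η) (hne : ν ≠ η) :
    ν.length < η.length :=
  lt_of_le_of_ne h.length_le fun hl => hne (h.eq_of_length hl)

lemma splitHt_lt {p : Set (List ℕ)} {η η' : List ℕ} (hη : IsSplitNode p η)
    (hpre : η <+: η') (hne : η ≠ η') : splitHt p η < splitHt p η' := by
  apply Set.ncard_lt_ncard ?_ (below_finite p η')
  constructor
  · rintro ν ⟨h1, h2, h3⟩
    refine ⟨h1, h2.trans hpre, ?_⟩
    have l1 := strict_prefix_length h2 h3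
    have l2 := hpre.length_le
    intro h; subst h; omega
  · intro hsub
    exact (hsub ⟨hη, hpre, hne⟩).2.2 rfl

lemma splitN_prefix_eq {p : Set (List ℕ)} {n : ℕ} {η η' : List ℕ}
    (h : η ∈ splitN p n) (h' : η' ∈ splitN p n) (hpre : η <+: η') : η = η' := by
  by_contra hne
  have := splitHt_lt h.1 hpre hne
  rw [h.2, h'.2] at this; omega

lemma one_lt_encard_of_eq {H : ℕ → ℕ} (hH : ∀ n, 2 ≤ H n) {s : Set ℕ} {m : ℕ}
    (h : s.encard = (H m : ℕ∞)) : 1 < s.encard := by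
  rw [h]
  have : 1 < H m := by have := hH m; omega
  exact_mod_cast this

lemma min_split_above {H : ℕ → ℕ} {p : Set (List ℕ)} (hp : IsHPerfect H p)
    (hH : ∀ n, 2 ≤ H n) {ζ : List ℕ} (hζ : ζ ∈ p) :
    ∃ η, IsSplitNode p η ∧ ζ <+: η ∧
      ∀ ν, IsSplitNode p ν → ζ <+: ν → ν <+: η → ν = η := by
  classical
  obtain ⟨ν, hν, hpre, hcard⟩ := hp.2.2.2 ζ hζ
  have hP : ∃ k, IsSplitNode p (ν.take k) ∧ ζ <+: ν.take k := by
    refine ⟨ν.length, ?_, ?_⟩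
    · rw [List.take_length]; exact ⟨hν, one_lt_encard_of_eq hH hcard⟩
    · rw [List.take_length]; exact hpre
  obtain ⟨hsplit, hpre0⟩ := Nat.find_spec hP
  refine ⟨ν.take (Nat.find hP), hsplit, hpre0, ?_⟩
  intro μ hμs hμζ hμη
  have hμν : μ <+: ν := hμη.trans (List.take_prefix _ _)
  have hμtake : μ = ν.take μ.length := List.prefix_iff_eq_take.mp hμν
  have h1 : Nat.find hP ≤ μ.length :=
    Nat.find_min' hP ⟨by rw [← hμtake]; exact hμs, by rw [← hμtake]; exact hμζ⟩
  have h2 : (ν.take (Nat.find hP)).length ≤ Nat.find hP := by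
    rw [List.length_take]; omega
  exact hμη.eq_of_length (le_antisymm hμη.length_le (le_trans h2 h1))

lemma exists_split_same_ht {H : ℕ → ℕ} {p : Set (List ℕ)} (hp : IsHPerfect H p)
    (hH : ∀ n, 2 ≤ H n) {ζ : List ℕ} (hζ : ζ ∈ p) (hns : ¬ IsSplitNode p ζ) :
    ∃ η, IsSplitNode p η ∧ ζ <+: η ∧ splitHt p η = splitHt p ζ := by
  obtain ⟨η, hs, hpre, hmin⟩ := min_split_above hp hH hζ
  refine ⟨η, hs, hpre, ?_⟩
  unfold splitHt
  congr 1
  ext ν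
  simp only [Set.mem_setOf_eq]
  constructor
  · rintro ⟨h1, h2, h3⟩
    rcases List.prefix_or_prefix_of_prefix h2 hpre with hc | hc
    · exact ⟨h1, hc, fun he => hns (he ▸ h1)⟩
    · exact absurd (hmin ν h1 hc h2) h3
  · rintro ⟨h1, h2, h3⟩
    refine ⟨h1, h2.trans hpre, fun he => ?_⟩
    subst he
    exact h3 (h2.eq_of_length (le_antisymm h2.length_le hpre.length_le))

lemma exists_split_next {H : ℕ → ℕ} {p : Set (List ℕ)} (hp : IsHPerfect H p)
    (hH : ∀ n, 2 ≤ H n) {ζ : List ℕ} (hs : IsSplitNode p ζ) :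
    ∃ η, IsSplitNode p η ∧ ζ <+: η ∧ ζ ≠ η ∧ splitHt p η = splitHt p ζ + 1 := by
  have hne : (succs p ζ).Nonempty := by
    rcases Set.eq_empty_or_nonempty (succs p ζ) with h | h
    · exfalso
      have h2 := hs.2
      rw [h, Set.encard_empty] at h2
      simp at h2
    · exact h
  obtain ⟨i, hi⟩ := hne
  have hζi : ζ ++ [i] ∈ p := hi
  obtain ⟨η, hsη, hpre, hmin⟩ := min_split_above hp hH hζi
  have hζη : ζ <+: η := (List.prefix_append ζ [i]).trans hpre
  have hlen : ζ.length + 1 ≤ η.length := by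
    have := hpre.length_le; simpa using this
  have hne2 : ζ ≠ η := fun h => by subst h; omega
  refine ⟨η, hsη, hζη, hne2, ?_⟩
  unfold splitHt
  have hset : {ν | IsSplitNode p ν ∧ ν <+: η ∧ ν ≠ η}
      = insert ζ {ν | IsSplitNode p ν ∧ ν <+: ζ ∧ ν ≠ ζ} := by
    ext ν
    simp only [Set.mem_setOf_eq, Set.mem_insert_iff]
    constructor
    · rintro ⟨h1, h2, h3⟩
      rcases List.prefix_or_prefix_of_prefix h2 hpre with hc | hc
      · rcases List.prefix_concat_iff.mp hc with he | hc'
        · exact absurd (hmin ν h1 (by rw [he]) h2) h3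
        · by_cases hνζ : ν = ζ
          · exact Or.inl hνζ
          · exact Or.inr ⟨h1, hc', hνζ⟩
      · exact absurd (hmin ν h1 hc h2) h3
    · rintro (rfl | ⟨h1, h2, h3⟩)
      · exact ⟨hs, hζη, hne2⟩
      · refine ⟨h1, h2.trans hζη, ?_⟩
        have := strict_prefix_length h2 h3
        intro he; subst he; omega
  rw [hset, Set.ncard_insert_of_notMem (fun h => h.2.2 rfl)
    ((prefix_finite ζ).subset fun ν hν => hν.2.1)]

lemma exists_split_add {H : ℕ → ℕ} {p : Set (List ℕ)} (hp : IsHPerfect H p)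
    (hH : ∀ n, 2 ≤ H n) :
    ∀ d {ζ : List ℕ}, IsSplitNode p ζ →
      ∃ η, IsSplitNode p η ∧ ζ <+: η ∧ splitHt p η = splitHt p ζ + d := by
  intro d
  induction d with
  | zero => exact fun hs => ⟨_, hs, List.prefix_refl _, rfl⟩
  | succ d ih =>
    intro ζ hs
    obtain ⟨η1, h1, h2, _, h4⟩ := exists_split_next hp hH hs
    obtain ⟨η, g1, g2, g3⟩ := ih h1
    exact ⟨η, g1, h2.trans g2, by omega⟩

lemma exists_splitN {H : ℕ → ℕ} {p : Set (List ℕ)} (hp : IsHPerfect H p)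
    (hH : ∀ n, 2 ≤ H n) {ζ : List ℕ} {m : ℕ} (hζ : ζ ∈ p)
    (hle : splitHt p ζ ≤ m) : ∃ η ∈ splitN p m, ζ <+: η := by
  by_cases hs : IsSplitNode p ζ
  · obtain ⟨η, g1, g2, g3⟩ := exists_split_add hp hH (m - splitHt p ζ) hs
    exact ⟨η, ⟨g1, by omega⟩, g2⟩
  · obtain ⟨η0, h1, h2, h3⟩ := exists_split_same_ht hp hH hζ hs
    obtain ⟨η, g1, g2, g3⟩ := exists_split_add hp hH (m - splitHt p ζ) h1
    exact ⟨η, ⟨g1, by omega⟩, h2.trans g2⟩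

lemma splitHt_nil (p : Set (List ℕ)) : splitHt p [] = 0 := by
  unfold splitHt
  convert Set.ncard_empty (List ℕ)
  ext ν
  simp only [Set.mem_setOf_eq, Set.mem_empty_iff_false, iff_false]
  rintro ⟨_, h2, h3⟩
  exact h3 (List.prefix_nil.mp h2)

lemma succs_one_below {H : ℕ → ℕ} {q p : Set (List ℕ)} {η : List ℕ}
    (hq : IsHPerfect H q) (hH : ∀ n, 2 ≤ H n) (hsub : q ⊆ restr p η)
    {ν : List ℕ} (hν : ν ∈ q) (hpre : ν <+: η) (hne : ν ≠ η) :
    (succs q ν).encard = 1 := by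
  have hsub1 : succs q ν ⊆ {i | ν ++ [i] <+: η} := by
    intro i hi
    rcases (hsub hi).2 with hc | hc
    · have hl := strict_prefix_length hpre hne
      have hl2 := hc.length_le
      simp only [List.length_append, List.length_cons, List.length_nil] at hl2
      have he : η = ν ++ [i] := hc.eq_of_length (by simp; omega)
      rw [he]
      exact List.prefix_rfl
    · exact hc
  have hsub2 : (succs q ν).Subsingleton := by
    intro i hi j hj
    have h1 := hsub1 hi; have h2 := hsub1 hj
    rcases List.prefix_or_prefix_of_prefix h1 h2 with hc | hc
    · have := hc.eq_of_length (by simp)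
      simpa using this
    · have := hc.eq_of_length (by simp)
      simpa using this.symm
  rcases hq.2.2.1 ν hν with h | h
  · exact h
  · exact absurd (one_lt_encard_of_eq hH h) (not_lt.mpr (Set.encard_le_one_iff.mpr fun a b ha hb => hsub2 ha hb))

lemma self_mem {H : ℕ → ℕ} {q p : Set (List ℕ)} {η : List ℕ}
    (hq : IsHPerfect H q) (hH : ∀ n, 2 ≤ H n) (hsub : q ⊆ restr p η) : η ∈ q := by
  obtain ⟨ν0, hν0⟩ := hq.1.1
  have hnil : [] ∈ q := hq.1.2 ν0 hν0 [] (List.nil_prefix)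
  obtain ⟨μ, hμ, _, hcard⟩ := hq.2.2.2 [] hnil
  rcases (hsub hμ).2 with hc | hc
  · exact hq.1.2 μ hμ η hc
  · by_cases he : μ = η
    · exact he ▸ hμ
    · exfalso
      have h1 := succs_one_below hq hH hsub hμ hc he
      rw [hcard] at h1
      have h2 : H μ.length = 1 := by exact_mod_cast h1
      have := hH μ.length; omega

end Stmt15Aux

open Stmt15Aux in
theorem stmt15 (H : ℕ → ℕ) (hH : ∀ n, 2 ≤ H n) (p : Set (List ℕ))
    (hp : IsHPerfect H p) (n : ℕ) (q : List ℕ → Set (List ℕ))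
    (hq : ∀ η ∈ splitN p n, IsHPerfect H (q η) ∧ q η ⊆ restr p η) :
    IsHPerfect H (⋃ η ∈ splitN p n, q η) ∧
    leN n p (⋃ η ∈ splitN p n, q η) ∧
    ∀ η ∈ splitN p n, restr (⋃ η' ∈ splitN p n, q η') η = q η := by
  set Q := ⋃ η ∈ splitN p n, q η with hQdef
  have hQmem : ∀ {ν}, ν ∈ Q → ∃ η ∈ splitN p n, ν ∈ q η := by
    intro ν h; simpa [hQdef] using h
  have hQmem' : ∀ {ν η}, η ∈ splitN p n → ν ∈ q η → ν ∈ Q := by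
    intro ν η h1 h2; exact Set.mem_biUnion h1 h2
  have hC : ∀ {η η'}, η ∈ splitN p n → η' ∈ splitN p n → η <+: η' → η = η' :=
    fun h h' hpre => splitN_prefix_eq h h' hpre
  have hA2 : ∀ {η}, η ∈ splitN p n → η ∈ q η :=
    fun h => self_mem (hq _ h).1 hH (hq _ h).2
  have hcomp : ∀ {η ν}, η ∈ splitN p n → ν ∈ q η → η <+: ν ∨ ν <+: η :=
    fun h hν => ((hq _ h).2 hν).2
  have hmemp : ∀ {η ν}, η ∈ splitN p n → ν ∈ q η → ν ∈ p :=
    fun h hν => ((hq _ h).2 hν).1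
  -- S1 : succs transfer above η
  have hS1 : ∀ {η ν}, η ∈ splitN p n → ν ∈ q η → η <+: ν →
      succs Q ν = succs (q η) ν := by
    intro η ν hη hν hpre
    ext i
    simp only [succs, Set.mem_setOf_eq]
    constructor
    · intro hi
      obtain ⟨η', hη', hi'⟩ := hQmem hi
      rcases hcomp hη' hi' with hc | hc
      · rcases List.prefix_or_prefix_of_prefix (hpre.trans (List.prefix_append ν [i])) hc
          with hd | hd
        · rw [hC hη hη' hd]; exact hi'
        · rw [hC hη' hη hd] at hi'; exact hi'
      · exfalso
        have he := hC hη hη' (hpre.trans ((List.prefix_append ν [i]).trans hc))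
        subst he
        have l1 := hc.length_le
        have l2 := hpre.length_le
        simp only [List.length_append, List.length_cons, List.length_nil] at l1
        omega
    · intro hi; exact hQmem' hη hi
  -- S2 : succs count below η
  have hS2 : ∀ {η ν}, η ∈ splitN p n → ν <+: η → ν ≠ η →
      (succs Q ν).encard = 1 ∨ (succs Q ν).encard = (H ν.length : ℕ∞) := by
    intro η ν hη hpre hne
    have hνp : ν ∈ p := hp.1.2 η hη.1.1 ν hpre
    have hsubp : succs Q ν ⊆ succs p ν := by
      intro i hi
      obtain ⟨η', hη', hi'⟩ := hQmem hi
      exact hmemp hη' hi'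
    have hnonempty : (succs Q ν).Nonempty := by
      obtain ⟨t, ht⟩ := hpre
      have htne : t ≠ [] := by rintro rfl; exact hne (by simpa using ht)
      obtain ⟨a, t', rfl⟩ := List.exists_cons_of_ne_nil htne
      refine ⟨a, ?_⟩
      have hpa : ν ++ [a] <+: η := ⟨t', by simpa using ht⟩
      exact hQmem' hη ((hq η hη).1.1.2 η (hA2 hη) _ hpa)
    rcases hp.2.2.1 ν hνp with h1 | h1
    · left
      obtain ⟨a, ha⟩ := Set.encard_eq_one.mp h1
      have hsub' : succs Q ν ⊆ {a} := ha ▸ hsubp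
      obtain ⟨b, hb⟩ := hnonempty
      have hba : b = a := hsub' hb
      subst hba
      rw [Set.encard_eq_one]
      exact ⟨b, Set.eq_singleton_iff_unique_mem.mpr ⟨hb, fun x hx => hsub' hx⟩⟩
    · right
      have heq : succs Q ν = succs p ν := by
        apply Set.Subset.antisymm hsubp
        intro i hi
        have hip : ν ++ [i] ∈ p := hi
        have hht : splitHt p (ν ++ [i]) ≤ n := by
          have hmono : {μ | IsSplitNode p μ ∧ μ <+: ν ++ [i] ∧ μ ≠ ν ++ [i]}
              ⊆ {μ | IsSplitNode p μ ∧ μ <+: η ∧ μ ≠ η} := by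
            rintro μ ⟨m1, m2, m3⟩
            rcases List.prefix_concat_iff.mp m2 with he | hc
            · exact absurd he m3
            · refine ⟨m1, hc.trans hpre, ?_⟩
              have l1 := hc.length_le
              have l2 := strict_prefix_length hpre hne
              intro he; subst he; omega
          calc splitHt p (ν ++ [i]) ≤ splitHt p η :=
                Set.ncard_le_ncard hmono (below_finite p η)
            _ = n := hη.2
        obtain ⟨η', hη', hpre'⟩ := exists_splitN hp hH hip hht
        exact hQmem' hη' ((hq η' hη').1.1.2 η' (hA2 hη') _ hpre')
      rw [heq]; exact h1
  have hnilp : ([] : List ℕ) ∈ p := by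
    obtain ⟨ν0, hν0⟩ := hp.1.1
    exact hp.1.2 ν0 hν0 [] List.nil_prefix
  obtain ⟨η0, hη0, -⟩ := exists_splitN hp hH (m := n) hnilp (by rw [splitHt_nil]; omega)
  refine ⟨⟨⟨⟨η0, hQmem' hη0 (hA2 hη0)⟩, ?_⟩, ?_, ?_, ?_⟩, ⟨?_, ?_⟩, ?_⟩
  · -- downward closed
    intro ν hν ζ hζ
    obtain ⟨η, hη, hν'⟩ := hQmem hν
    exact hQmem' hη ((hq η hη).1.1.2 ν hν' ζ hζ)
  · -- bound
    intro ν hν l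
    obtain ⟨η, hη, hν'⟩ := hQmem hν
    exact (hq η hη).1.2.1 ν hν' l
  · -- succs condition
    intro ν hν
    obtain ⟨η, hη, hν'⟩ := hQmem hν
    rcases hcomp hη hν' with hc | hc
    · rw [hS1 hη hν' hc]; exact (hq η hη).1.2.2.1 ν hν'
    · by_cases he : ν = η
      · subst he
        rw [hS1 hη hν' List.prefix_rfl]
        exact (hq ν hη).1.2.2.1 ν hν'
      · exact hS2 hη hc he
  · -- perfect
    intro ν hν
    obtain ⟨η, hη, hν'⟩ := hQmem hν
    obtain ⟨μ, hμ, hpre, hcard⟩ := (hq η hη).1.2.2.2 ν hν'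
    have hημ : η <+: μ := by
      rcases hcomp hη hμ with hc | hc
      · exact hc
      · by_cases he : μ = η
        · rw [he]
        · exfalso
          have h1 := succs_one_below (hq η hη).1 hH (hq η hη).2 hμ hc he
          rw [hcard] at h1
          have h2 : H μ.length = 1 := by exact_mod_cast h1
          have := hH μ.length; omega
    refine ⟨μ, hQmem' hη hμ, hpre, ?_⟩
    rw [hS1 hη hμ hημ]; exact hcard
  · -- Q ⊆ p
    intro ν hν
    obtain ⟨η, hη, hν'⟩ := hQmem hν
    exact hmemp hη hν'
  · -- splitN p n ⊆ Q
    intro η hη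
    exact hQmem' hη (hA2 hη)
  · -- restr Q η = q η
    intro η hη
    ext ν
    simp only [restr, Set.mem_setOf_eq]
    constructor
    · rintro ⟨hνQ, hcmp'⟩
      obtain ⟨η', hη', hν'⟩ := hQmem hνQ
      rcases hcmp' with hc | hc
      · rcases hcomp hη' hν' with hd | hd
        · rcases List.prefix_or_prefix_of_prefix hc hd with he | he
          · rw [hC hη hη' he]; exact hν'
          · rw [hC hη' hη he] at hν'; exact hν'
        · rw [← hC hη hη' (hc.trans hd)] at hν'; exact hν'
      · exact (hq η hη).1.1.2 η (hA2 hη) ν hc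
    · intro hν'
      exact ⟨hQmem' hη hν', hcomp hη hν'⟩
end

section
/- Random real forcing (Borel subsets of [0,1] of positive Lebesgue measure, ordered by ⊇) is strongly ω^ω-bounding with the relations p ≤_n q defined by p ⊇ q and μ(p − q) ≤ 10^{-n-1}·μ(p). In particular: (a) if p_0 ≥_0 p_1 ≥_1 p_2 ≥_2 ⋯ then q = ⋂_n p_n has measure ≥ 0.8·μ(p_0) > 0, and q ≥_{n-1} p_n for all n > 0; (b) for every name α̇ for an ordinal, every condition p and n ∈ ω, there is q with p ≤_n q and a finite set A of ordinals with q ⊩ α̇ ∈ A. -/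
open MeasureTheory Set
open scoped ENNReal

/-- A condition of random real forcing: a measurable subset of `[0,1]` of
positive Lebesgue measure (conditions are ordered by reverse inclusion:
`q` is stronger than `p` iff `q ⊆ p`). -/
def RCond : Type := {s : Set ℝ // MeasurableSet s ∧ s ⊆ Icc 0 1 ∧ 0 < volume s}

namespace Stmt17Aux

lemma vol_le_one {s : Set ℝ} (hs : s ⊆ Icc 0 1) : volume s ≤ 1 := by
  calc volume s ≤ volume (Icc (0:ℝ) 1) := measure_mono hs
    _ = 1 := by rw [Real.volume_Icc]; norm_num

lemma vol_ne_top {s : Set ℝ} (hs : s ⊆ Icc 0 1) : volume s ≠ ∞ :=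
  ne_top_of_le_ne_top ENNReal.one_ne_top (vol_le_one hs)

def Good (Forc : RCond → Ordinal.{0} → Prop) (s : Set ℝ) (β : Ordinal.{0}) : Prop :=
  ∃ r : RCond, r.1 = s ∧ Forc r β

noncomputable def M (Forc : RCond → Ordinal.{0} → Prop) (R : Set ℝ) : ℝ≥0∞ :=
  sSup (volume '' {s | (∃ β, Good Forc s β) ∧ s ⊆ R})

open scoped Classical in
noncomputable def step (Forc : RCond → Ordinal.{0} → Prop) (R : Set ℝ) :
    Set ℝ × Ordinal.{0} :=
  if h : ∃ sβ : Set ℝ × Ordinal.{0},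
      Good Forc sβ.1 sβ.2 ∧ sβ.1 ⊆ R ∧ M Forc R ≤ 2 * volume sβ.1
  then h.choose else (∅, 0)

noncomputable def rem (Forc : RCond → Ordinal.{0} → Prop) (p : Set ℝ) : ℕ → Set ℝ
  | 0 => p
  | (i+1) => rem Forc p i \ (step Forc (rem Forc p i)).1

variable {Forc : RCond → Ordinal.{0} → Prop} {R p : Set ℝ}

lemma step_sub : (step Forc R).1 ⊆ R := by
  unfold step
  split
  · next h => exact h.choose_spec.2.1
  · exact empty_subset R

lemma step_good (h : (step Forc R).1.Nonempty) :
    Good Forc (step Forc R).1 (step Forc R).2 := by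
  by_cases hex : ∃ sβ : Set ℝ × Ordinal.{0},
      Good Forc sβ.1 sβ.2 ∧ sβ.1 ⊆ R ∧ M Forc R ≤ 2 * volume sβ.1
  · unfold step
    rw [dif_pos hex]
    exact hex.choose_spec.1
  · unfold step at h
    rw [dif_neg hex] at h
    simp at h

lemma good_meas {s : Set ℝ} {β} (h : Good Forc s β) : MeasurableSet s := by
  obtain ⟨r, hr, -⟩ := h; exact hr ▸ r.2.1

lemma good_pos {s : Set ℝ} {β} (h : Good Forc s β) : 0 < volume s := by
  obtain ⟨r, hr, -⟩ := h; exact hr ▸ r.2.2.2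

lemma step_meas : MeasurableSet (step Forc R).1 := by
  rcases eq_empty_or_nonempty (step Forc R).1 with h | h
  · rw [h]; exact MeasurableSet.empty
  · exact good_meas (step_good h)

/-- If `R` is a condition, the chosen step has measure at least half the sup. -/
lemma step_spec (dense : ∀ p : RCond, ∃ q : RCond, q.1 ⊆ p.1 ∧ ∃ β, Forc q β)
    (hm : MeasurableSet R) (hs : R ⊆ Icc 0 1) (hp : 0 < volume R) :
    M Forc R ≤ 2 * volume (step Forc R).1 := by
  have hex : ∃ sβ : Set ℝ × Ordinal.{0},
      Good Forc sβ.1 sβ.2 ∧ sβ.1 ⊆ R ∧ M Forc R ≤ 2 * volume sβ.1 := by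
    obtain ⟨q, hq, β, hβ⟩ := dense ⟨R, hm, hs, hp⟩
    have hqmem : volume q.1 ∈ volume '' {s | (∃ β, Good Forc s β) ∧ s ⊆ R} :=
      ⟨q.1, ⟨⟨β, ⟨q, rfl, hβ⟩⟩, hq⟩, rfl⟩
    have hM0 : M Forc R ≠ 0 := by
      intro h0
      have := le_sSup hqmem
      rw [M] at h0
      rw [h0, le_zero_iff] at this
      exact q.2.2.2.ne' this
    have hMtop : M Forc R ≠ ∞ := by
      refine ne_top_of_le_ne_top ENNReal.one_ne_top (sSup_le ?_)
      rintro v ⟨s, ⟨-, hsR⟩, rfl⟩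
      exact vol_le_one (hsR.trans hs)
    have hhalf : M Forc R / 2 < M Forc R := ENNReal.half_lt_self hM0 hMtop
    rw [M, lt_sSup_iff] at hhalf
    obtain ⟨v, ⟨s, ⟨⟨β', hβ'⟩, hsR⟩, rfl⟩, hv⟩ := hhalf
    refine ⟨⟨s, β'⟩, hβ', hsR, ?_⟩
    calc M Forc R = M Forc R / 2 + M Forc R / 2 := (ENNReal.add_halves _).symm
      _ ≤ volume s + volume s := add_le_add hv.le hv.le
      _ = 2 * volume s := (two_mul _).symm
  rw [step, dif_pos hex]
  exact hex.choose_spec.2.2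

lemma rem_sub : ∀ i, rem Forc p i ⊆ p
  | 0 => subset_rfl
  | (i+1) => (diff_subset).trans (rem_sub i)

lemma rem_meas (hp : MeasurableSet p) : ∀ i, MeasurableSet (rem Forc p i)
  | 0 => hp
  | (i+1) => (rem_meas hp i).diff step_meas

lemma rem_anti : ∀ i, rem Forc p (i+1) ⊆ rem Forc p i := fun _ => diff_subset

lemma rem_anti' {i j : ℕ} (h : i ≤ j) : rem Forc p j ⊆ rem Forc p i := by
  induction j, h using Nat.le_induction with
  | base => exact subset_rfl
  | succ n hn ih => exact (rem_anti n).trans ih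

lemma cover : ∀ N, p \ rem Forc p N ⊆ ⋃ j ∈ Finset.range N, (step Forc (rem Forc p j)).1 := by
  intro N
  induction N with
  | zero => simp [rem]
  | succ N ih =>
    intro x hx
    obtain ⟨hxp, hxr⟩ := hx
    by_cases hxN : x ∈ rem Forc p N
    · have hxs : x ∈ (step Forc (rem Forc p N)).1 := by
        by_contra hc
        exact hxr ⟨hxN, hc⟩
      exact mem_biUnion (Finset.mem_range.2 (Nat.lt_succ_self N)) hxs
    · obtain ⟨j, hj, hxj⟩ := mem_iUnion₂.1 (ih ⟨hxp, hxN⟩)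
      exact mem_biUnion (Finset.mem_range.2 (Nat.lt_succ_of_lt (Finset.mem_range.1 hj))) hxj

lemma vol_split (hp : MeasurableSet p) (i : ℕ) :
    volume (step Forc (rem Forc p i)).1 + volume (rem Forc p (i+1)) = volume (rem Forc p i) := by
  have h := measure_inter_add_diff (μ := volume) (rem Forc p i) (step_meas (Forc := Forc) (R := rem Forc p i))
  rwa [inter_eq_self_of_subset_right step_sub] at h

lemma vol_sum (hp : MeasurableSet p) :
    ∀ N, (∑ j ∈ Finset.range N, volume (step Forc (rem Forc p j)).1) + volume (rem Forc p N)
      = volume p := by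
  intro N
  induction N with
  | zero => simp [rem]
  | succ N ih =>
    rw [Finset.sum_range_succ, add_assoc, vol_split hp N, ih]

end Stmt17Aux

open Stmt17Aux in
/-- Random real forcing is strongly `ω^ω`-bounding, with `p ≤ₙ q` defined by
`q ⊆ p` and `μ(p \ q) ≤ 10^{-n-1} μ(p)`.

A name `α̇` for an ordinal is represented by the relation `Forc q β`
("`q ⊩ α̇ = β`"), which persists to stronger conditions (`mono`) and is
densely decided (`dense`).

(a) If `p 0 ≤₀ p 1 ≤₁ p 2 ≤₂ ⋯` is a fusion sequence, then `q = ⋂ n, p n`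
has measure `≥ (4/5)·μ(p 0)` (in particular positive), and `p n ≤_{n-1} q`
for all `n > 0`.

(b) For every condition `p` and every `n` there is a condition `q` with
`p ≤ₙ q` and a finite set `A` of ordinals such that `q ⊩ α̇ ∈ A` (i.e.
densely below `q` the name is decided to be an element of `A`). -/
theorem stmt17
    (Forc : RCond → Ordinal.{0} → Prop)
    (mono : ∀ p q : RCond, q.1 ⊆ p.1 → ∀ β, Forc p β → Forc q β)
    (dense : ∀ p : RCond, ∃ q : RCond, q.1 ⊆ p.1 ∧ ∃ β, Forc q β) :
    ((∀ p : ℕ → RCond,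
        (∀ n, (p (n + 1)).1 ⊆ (p n).1 ∧
          volume ((p n).1 \ (p (n + 1)).1) ≤ ((10 : ℝ≥0∞) ^ (n + 1))⁻¹ * volume (p n).1) →
        ((4 / 5 : ℝ≥0∞) * volume (p 0).1 ≤ volume (⋂ n, (p n).1) ∧
          ∀ n, 0 < n → (⋂ k, (p k).1) ⊆ (p n).1 ∧
            volume ((p n).1 \ ⋂ k, (p k).1) ≤ ((10 : ℝ≥0∞) ^ n)⁻¹ * volume (p n).1))
      ∧
      (∀ (p : RCond) (n : ℕ), ∃ (A : Finset Ordinal.{0}) (q : RCond),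
        q.1 ⊆ p.1 ∧ volume (p.1 \ q.1) ≤ ((10 : ℝ≥0∞) ^ (n + 1))⁻¹ * volume p.1 ∧
        ∀ r : RCond, r.1 ⊆ q.1 → ∃ r' : RCond, r'.1 ⊆ r.1 ∧ ∃ β ∈ A, Forc r' β)) := by
  constructor
  · -- part (a)
    intro p hp
    have hsub : ∀ m n : ℕ, m ≤ n → (p n).1 ⊆ (p m).1 := by
      intro m n h
      induction n, h using Nat.le_induction with
      | base => exact subset_rfl
      | succ n hn ih => exact ((hp n).1).trans ih
    have hfin : ∀ n, volume (p n).1 ≠ ∞ := fun n => vol_ne_top (p n).2.2.1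
    have hgeo : ∑' k : ℕ, ((10 : ℝ≥0∞)⁻¹) ^ k ≤ 2 := by
      rw [ENNReal.tsum_geometric]
      have h : (1:ℝ≥0∞) - 10⁻¹ = 9/10 := by
        rw [ENNReal.sub_eq_of_eq_add (by norm_num)]
        rw [← one_div, ENNReal.div_add_div_same]
        norm_num [ENNReal.div_self]
      rw [h, ENNReal.inv_le_iff_le_mul (by norm_num) (by norm_num), mul_comm,
        ← mul_div_assoc,
        ENNReal.le_div_iff_mul_le (Or.inl (by norm_num)) (Or.inl (by norm_num))]
      norm_num
    have h15 : (10:ℝ≥0∞)⁻¹ * 2 = 1/5 := by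
      rw [ENNReal.eq_div_iff (by norm_num) (by norm_num), mul_comm (10:ℝ≥0∞)⁻¹ 2,
        ← mul_assoc]
      norm_num
      exact ENNReal.mul_inv_cancel (by norm_num) (by norm_num)
    have h1021 : (10:ℝ≥0∞)⁻¹ * 2 ≤ 1 := by
      rw [h15, ENNReal.div_le_iff (by norm_num) (by norm_num)]
      norm_num
    set q := ⋂ k, (p k).1 with hq
    have key : ∀ n, (p n).1 \ q ⊆ ⋃ k, ((p (n+k)).1 \ (p (n+k+1)).1) := by
      intro n x hx
      obtain ⟨hxn, hxq⟩ := hx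
      have hex : ∃ m, x ∉ (p m).1 := by
        by_contra hc
        push_neg at hc
        exact hxq (mem_iInter.2 hc)
      classical
      have hxj : x ∉ (p (Nat.find hex)).1 := Nat.find_spec hex
      have hlt : ∀ i, i < Nat.find hex → x ∈ (p i).1 := fun i hi => by
        by_contra hc; exact (Nat.find_min hex hi) hc
      have hnj : n < Nat.find hex := by
        by_contra hc
        push_neg at hc
        exact hxj (hsub (Nat.find hex) n hc hxn)
      refine mem_iUnion.2 ⟨Nat.find hex - n - 1, ?_⟩
      have h2 : n + (Nat.find hex - n - 1) + 1 = Nat.find hex := by omega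
      constructor
      · exact hlt _ (by omega)
      · rw [h2]; exact hxj
    have main : ∀ n, volume ((p n).1 \ q) ≤ ((10:ℝ≥0∞) ^ (n+1))⁻¹ * 2 * volume (p n).1 := by
      intro n
      have hsumid : ∀ k : ℕ, ((10:ℝ≥0∞) ^ (n+k+1))⁻¹ = ((10:ℝ≥0∞) ^ (n+1))⁻¹ * ((10:ℝ≥0∞)⁻¹) ^ k := by
        intro k
        rw [show n+k+1 = (n+1)+k by ring, pow_add,
          ENNReal.mul_inv (Or.inl (by positivity)) (Or.inl (ENNReal.pow_ne_top (by norm_num)))]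
        congr 1
        exact ENNReal.inv_pow
      calc volume ((p n).1 \ q) ≤ volume (⋃ k, ((p (n+k)).1 \ (p (n+k+1)).1)) :=
            measure_mono (key n)
        _ ≤ ∑' k, volume ((p (n+k)).1 \ (p (n+k+1)).1) := measure_iUnion_le _
        _ ≤ ∑' k : ℕ, ((10:ℝ≥0∞) ^ (n+k+1))⁻¹ * volume (p n).1 := by
            refine ENNReal.tsum_le_tsum fun k => ?_
            calc volume ((p (n+k)).1 \ (p (n+k+1)).1)
                ≤ ((10:ℝ≥0∞) ^ (n+k+1))⁻¹ * volume (p (n+k)).1 := (hp (n+k)).2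
              _ ≤ ((10:ℝ≥0∞) ^ (n+k+1))⁻¹ * volume (p n).1 := by
                  gcongr
                  exact hsub n (n+k) (Nat.le_add_right n k)
        _ = (∑' k : ℕ, ((10:ℝ≥0∞) ^ (n+k+1))⁻¹) * volume (p n).1 := ENNReal.tsum_mul_right
        _ ≤ ((10:ℝ≥0∞) ^ (n+1))⁻¹ * 2 * volume (p n).1 := by
            gcongr
            calc (∑' k : ℕ, ((10:ℝ≥0∞) ^ (n+k+1))⁻¹)
                = ((10:ℝ≥0∞) ^ (n+1))⁻¹ * ∑' k : ℕ, ((10:ℝ≥0∞)⁻¹) ^ k := by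
                  rw [← ENNReal.tsum_mul_left]
                  exact tsum_congr hsumid
              _ ≤ ((10:ℝ≥0∞) ^ (n+1))⁻¹ * 2 := by gcongr
    constructor
    · -- (4/5) vol p0 ≤ vol q
      have hc45 : (4/5:ℝ≥0∞) + 10⁻¹ * 2 = 1 := by
        rw [h15, ENNReal.div_add_div_same]
        norm_num [ENNReal.div_self]
      have hmain0 : volume ((p 0).1 \ q) ≤ 10⁻¹ * 2 * volume (p 0).1 := by
        have := main 0
        rwa [zero_add, pow_one] at this
      have hle : volume (p 0).1 ≤ volume q + 10⁻¹ * 2 * volume (p 0).1 := by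
        calc volume (p 0).1 ≤ volume (((p 0).1 \ q) ∪ q) :=
              measure_mono (subset_diff_union _ _)
          _ ≤ volume ((p 0).1 \ q) + volume q := measure_union_le _ _
          _ ≤ 10⁻¹ * 2 * volume (p 0).1 + volume q := by gcongr
          _ = volume q + 10⁻¹ * 2 * volume (p 0).1 := add_comm _ _
      have hfin' : 10⁻¹ * 2 * volume (p 0).1 ≠ ∞ :=
        ENNReal.mul_ne_top (ENNReal.mul_ne_top (by norm_num) (by norm_num)) (hfin 0)
      refine (ENNReal.add_le_add_iff_right hfin').1 ?_
      calc (4/5:ℝ≥0∞) * volume (p 0).1 + 10⁻¹ * 2 * volume (p 0).1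
          = ((4/5:ℝ≥0∞) + 10⁻¹ * 2) * volume (p 0).1 := (add_mul _ _ _).symm
        _ = volume (p 0).1 := by rw [hc45, one_mul]
        _ ≤ volume q + 10⁻¹ * 2 * volume (p 0).1 := hle
    · intro n hn
      refine ⟨iInter_subset _ n, ?_⟩
      calc volume ((p n).1 \ q) ≤ ((10:ℝ≥0∞) ^ (n+1))⁻¹ * 2 * volume (p n).1 := main n
        _ ≤ ((10:ℝ≥0∞) ^ n)⁻¹ * volume (p n).1 := by
            gcongr ?_ * _
            rw [pow_succ,
              ENNReal.mul_inv (Or.inl (by positivity)) (Or.inl (ENNReal.pow_ne_top (by norm_num))),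
              mul_assoc]
            calc ((10:ℝ≥0∞) ^ n)⁻¹ * (10⁻¹ * 2) ≤ ((10:ℝ≥0∞) ^ n)⁻¹ * 1 := by gcongr
              _ = ((10:ℝ≥0∞) ^ n)⁻¹ := mul_one _
  · -- part (b)
    intro p n
    have hpm := p.2.1
    have hps := p.2.2.1
    have hpp := p.2.2.2
    have hptop : volume p.1 ≠ ∞ := vol_ne_top hps
    set ε := ((10:ℝ≥0∞) ^ (n+1))⁻¹ * volume p.1 with hε
    have hεpos : 0 < ε := by
      rw [hε]
      exact ENNReal.mul_pos (by simp [ENNReal.pow_ne_top]) hpp.ne'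
    have hsum : ∀ N, (∑ j ∈ Finset.range N, volume (step Forc (rem Forc p.1 j)).1)
        ≤ volume p.1 := by
      intro N
      rw [← vol_sum (Forc := Forc) hpm N]
      exact le_self_add
    have htsum : ∑' j : ℕ, volume (step Forc (rem Forc p.1 j)).1 ≤ volume p.1 := by
      rw [ENNReal.tsum_eq_iSup_sum]
      refine iSup_le fun s => ?_
      refine le_trans (Finset.sum_le_sum_of_subset (fun x hx => Finset.mem_range.2
        (Nat.lt_succ_of_le (Finset.le_sup (f := id) hx)))) (hsum ((s.sup id) + 1))
    have hex : ∃ N, volume (rem Forc p.1 N) ≤ ε := by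
      by_contra hc
      push_neg at hc
      have hrc : ∀ N, 0 < volume (rem Forc p.1 N) := fun N => hεpos.trans (hc N)
      have hRm : MeasurableSet (⋂ N, rem Forc p.1 N) :=
        MeasurableSet.iInter fun N => rem_meas hpm N
      have hRs : (⋂ N, rem Forc p.1 N) ⊆ Icc 0 1 :=
        (iInter_subset _ 0).trans ((rem_sub 0).trans hps)
      have hRvol : ε ≤ volume (⋂ N, rem Forc p.1 N) := by
        rw [Antitone.measure_iInter (fun i j h => rem_anti' h)
          (fun i => (rem_meas hpm i).nullMeasurableSet)
          ⟨0, vol_ne_top ((rem_sub 0).trans hps)⟩]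
        exact le_iInf fun N => (hc N).le
      obtain ⟨s0, hs0, β0, hβ0⟩ := dense ⟨_, hRm, hRs, hεpos.trans_le hRvol⟩
      have hδ0 : volume s0.1 ≠ 0 := s0.2.2.2.ne'
      have hδle : ∀ N, volume s0.1 ≤ 2 * volume (step Forc (rem Forc p.1 N)).1 := by
        intro N
        refine le_trans ?_ (step_spec dense (rem_meas hpm N) ((rem_sub N).trans hps) (hrc N))
        exact le_sSup ⟨s0.1, ⟨⟨β0, ⟨s0, rfl, hβ0⟩⟩, hs0.trans (iInter_subset _ N)⟩, rfl⟩
      have hcontra : (∞:ℝ≥0∞) ≤ volume p.1 := by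
        calc (∞:ℝ≥0∞) = ∑' _ : ℕ, volume s0.1 / 2 :=
              (ENNReal.tsum_const_eq_top_of_ne_zero
                (by simp [ENNReal.div_eq_zero_iff, hδ0])).symm
          _ ≤ ∑' N : ℕ, volume (step Forc (rem Forc p.1 N)).1 := by
              refine ENNReal.tsum_le_tsum fun N => ?_
              rw [ENNReal.div_le_iff (by norm_num) (by norm_num), mul_comm]
              exact hδle N
          _ ≤ volume p.1 := htsum
      exact hptop (top_le_iff.1 hcontra)
    obtain ⟨N, hN⟩ := hex
    have hvrem : volume (rem Forc p.1 N) ≠ ∞ := vol_ne_top ((rem_sub N).trans hps)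
    have hremlt : volume (rem Forc p.1 N) < volume p.1 := by
      refine lt_of_le_of_lt hN ?_
      calc ε < 1 * volume p.1 := by
            rw [hε]
            rw [mul_comm _ (volume p.1), mul_comm (1:ℝ≥0∞)]
            refine ENNReal.mul_lt_mul_right hpp.ne' hptop ?_
            rw [ENNReal.inv_lt_one]
            exact one_lt_pow₀ (by norm_num) (Nat.succ_ne_zero n)
        _ = volume p.1 := one_mul _
    have hqm : MeasurableSet (p.1 \ rem Forc p.1 N) := hpm.diff (rem_meas hpm N)
    have hqs : (p.1 \ rem Forc p.1 N) ⊆ Icc 0 1 := diff_subset.trans hps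
    have hqpos : 0 < volume (p.1 \ rem Forc p.1 N) := by
      rw [measure_diff (rem_sub N) (rem_meas hpm N).nullMeasurableSet hvrem]
      exact tsub_pos_of_lt hremlt
    refine ⟨(Finset.range N).image (fun j => (step Forc (rem Forc p.1 j)).2),
      ⟨p.1 \ rem Forc p.1 N, hqm, hqs, hqpos⟩, diff_subset, ?_, ?_⟩
    · show volume (p.1 \ (p.1 \ rem Forc p.1 N)) ≤ ε
      rw [diff_diff_cancel_left (rem_sub N)]
      exact hN
    · intro r hr
      have hrU : r.1 ⊆ ⋃ j ∈ Finset.range N, (step Forc (rem Forc p.1 j)).1 :=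
        hr.trans (cover N)
      have hjex : ∃ j ∈ Finset.range N, 0 < volume (r.1 ∩ (step Forc (rem Forc p.1 j)).1) := by
        by_contra hc
        push_neg at hc
        have hr0 : volume r.1 = 0 := by
          have h1 : r.1 ⊆ ⋃ j ∈ Finset.range N, (r.1 ∩ (step Forc (rem Forc p.1 j)).1) := by
            intro x hx
            obtain ⟨j, hj, hxj⟩ := mem_iUnion₂.1 (hrU hx)
            exact mem_iUnion₂.2 ⟨j, hj, hx, hxj⟩
          refine le_antisymm ?_ (by simp)
          calc volume r.1
              ≤ ∑ j ∈ Finset.range N, volume (r.1 ∩ (step Forc (rem Forc p.1 j)).1) :=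
                (measure_mono h1).trans (measure_biUnion_finset_le _ _)
            _ = 0 := Finset.sum_eq_zero fun j hj => nonpos_iff_eq_zero.1 (hc j hj)
        exact r.2.2.2.ne' hr0
      obtain ⟨j, hj, hjpos⟩ := hjex
      have hne : (step Forc (rem Forc p.1 j)).1.Nonempty := by
        rw [nonempty_iff_ne_empty]
        intro h
        rw [h, inter_empty] at hjpos
        simp at hjpos
      obtain ⟨c, hc1, hc2⟩ := step_good hne
      refine ⟨⟨r.1 ∩ (step Forc (rem Forc p.1 j)).1,
        r.2.1.inter step_meas, inter_subset_left.trans r.2.2.1, hjpos⟩,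
        inter_subset_left, (step Forc (rem Forc p.1 j)).2,
        Finset.mem_image_of_mem _ hj, ?_⟩
      exact mono c _ (by rw [hc1]; exact inter_subset_right) _ hc2
end
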